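/- arXiv:2502.00823 — 9 statements merged into one kernel-verified Lean document; each statement's English description precedes it below -/
import Mathlib

section
/- Let N ≥ 2, let T ≥ 1 and let 0 < δ ≤ 2^{−(T+1)}. Let E be the N×N complex matrix with entry 1 in position (0,0) and 0 elsewhere. Then there exist functions v_t : {−1,1}^{t−1} → ℝ (t = 1,…,T) such that for every sign sequence ε ∈ {−1,1}^T there exists an N-dimensional density matrix ρ of rank one satisfying ε_t · (Re Tr(Eρ) − v_t(ε_1,…,ε_{t−1})) ≥ δ for all t ∈ {1,…,T}. In particular, the class of all N-dimensional density matrices δ-shatters sequentially a depth-T tree all of whose measurement labels equal the single fixed measurement E, so its sequential fat-shattering dimension against {E} is Ω(log_2(1/δ)). -/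
/-!
Binary search on `[0, 1]`. With steps indexed from `0`, `v_t = 1/2 + ∑_{s<t} ε_s 2^{-(s+2)}` is
the midpoint of the dyadic interval of length `2^{-t}` chosen by `ε_0, …, ε_{t-1}`, and `ρ` is a
pure state with `Tr(Eρ) = ρ₀₀ = p := v_T`. Then `p - v_t` is `ε_t 2^{-(t+2)}` plus later steps
of total size at most `2^{-(t+2)} - 2^{-(T+1)}`, so `ε_t (p - v_t) ≥ 2^{-(T+1)}`; the same bound
puts `p` in `[0, 1]`.
-/

open ComplexOrder Finset

theorem Matrix.rank_vecMulVec_self_star {n K : Type*} [Fintype n] [Field K] [StarRing K]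
    {ψ : n → K} (hψ : ψ ≠ 0) : (vecMulVec ψ (star ψ)).rank = 1 := by
  classical
  refine le_antisymm (by simpa using rank_vecMulVec_le ψ (star ψ))
    (Nat.one_le_iff_ne_zero.mpr ?_)
  rw [Ne, rank, Submodule.finrank_eq_zero, LinearMap.range_eq_bot, ← toLin'_apply',
    LinearEquiv.map_eq_zero_iff, vecMulVec_eq_zero, star_eq_zero, or_self]
  exact hψ

def Matrix.IsPureState {n : Type*} [Fintype n] (ρ : Matrix n n ℂ) : Prop :=
  ρ.PosSemidef ∧ ρ.trace = 1 ∧ ρ.rank = 1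

theorem Matrix.isPureState_vecMulVec_self_star {n : Type*} [Fintype n] {ψ : n → ℂ}
    (hψ : ψ ⬝ᵥ star ψ = 1) : (vecMulVec ψ (star ψ)).IsPureState := by
  refine ⟨posSemidef_vecMulVec_self_star ψ, by rw [trace_vecMulVec, hψ],
    rank_vecMulVec_self_star ?_⟩
  rintro rfl
  simp at hψ

theorem Matrix.exists_isPureState_apply_eq {n : Type*} [Fintype n] [DecidableEq n] {i j : n}
    (hij : i ≠ j) {p : ℝ} (hp0 : 0 ≤ p) (hp1 : p ≤ 1) :
    ∃ ρ : Matrix n n ℂ, ρ.IsPureState ∧ ρ i i = p := by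
  set ψ : n → ℂ := Pi.single i (√p : ℂ) + Pi.single j (√(1 - p) : ℂ)
  have hψ : ψ ⬝ᵥ star ψ = 1 := by
    simp [ψ, hij, hij.symm, ← Complex.ofReal_mul, hp0, hp1]
  refine ⟨_, isPureState_vecMulVec_self_star hψ, ?_⟩
  simp [ψ, vecMulVec_apply, hij, ← Complex.ofReal_mul, hp0]

theorem abs_sum_range_div_two_pow_le {e : ℕ → ℝ} (he : ∀ s, |e s| ≤ 1) (T : ℕ) :
    |∑ s ∈ range T, e s / 2 ^ (s + 2)| ≤ 1 / 2 - ((2 : ℝ) ^ (T + 1))⁻¹ := by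
  induction T with
  | zero => norm_num
  | succ T ih =>
    have hlast : |e T / 2 ^ (T + 2)| ≤ ((2 : ℝ) ^ (T + 2))⁻¹ := by
      rw [abs_div, abs_of_pos (by positivity : (0 : ℝ) < 2 ^ (T + 2)), div_eq_mul_inv]
      exact mul_le_of_le_one_left (by positivity) (he T)
    calc |∑ s ∈ range (T + 1), e s / 2 ^ (s + 2)|
        ≤ |∑ s ∈ range T, e s / 2 ^ (s + 2)| + |e T / 2 ^ (T + 2)| := by
          rw [sum_range_succ]; exact abs_add_le _ _
      _ ≤ 1 / 2 - ((2 : ℝ) ^ (T + 1))⁻¹ + ((2 : ℝ) ^ (T + 2))⁻¹ := add_le_add ih hlast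
      _ = 1 / 2 - ((2 : ℝ) ^ (T + 1 + 1))⁻¹ := by rw [pow_succ, pow_succ]; ring

theorem inv_two_pow_le_mul_sum_Ico_div_two_pow {e : ℕ → ℝ} (he : ∀ s, |e s| = 1) {t T : ℕ}
    (htT : t < T) : ((2 : ℝ) ^ (T + 1))⁻¹ ≤ e t * ∑ s ∈ Ico t T, e s / 2 ^ (s + 2) := by
  have hsq : ∀ s, e s * e s = 1 := fun s => by rw [← abs_mul_abs_self, he, one_mul]
  induction T, htT using Nat.le_induction with
  | base => rw [Nat.Ico_succ_singleton, sum_singleton, mul_div_assoc', hsq, pow_succ]; simp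
  | succ T htT ih =>
    have hcross : -1 ≤ e t * e T := by
      simpa only [abs_mul, he, mul_one] using neg_abs_le (e t * e T)
    calc ((2 : ℝ) ^ (T + 1 + 1))⁻¹ = ((2 : ℝ) ^ (T + 1))⁻¹ + -1 / 2 ^ (T + 2) := by
          rw [pow_succ, pow_succ]; ring
      _ ≤ e t * ∑ s ∈ Ico t T, e s / 2 ^ (s + 2) + e t * e T / 2 ^ (T + 2) := by gcongr
      _ = e t * ∑ s ∈ Ico t (T + 1), e s / 2 ^ (s + 2) := by
          rw [sum_Ico_succ_top (by omega), mul_add, mul_div_assoc']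

theorem single_measurement_shattering_general (N T : ℕ) (hN : 2 ≤ N)
    (δ : ℝ) (hδ : δ ≤ ((2 : ℝ) ^ (T + 1))⁻¹)
    (E : Matrix (Fin N) (Fin N) ℂ)
    (hE : E = fun i j => if i.1 = 0 ∧ j.1 = 0 then 1 else 0) :
    ∃ v : (t : Fin T) → (Fin t.1 → ℝ) → ℝ,
      ∀ ε : Fin T → ℝ, (∀ t, ε t = 1 ∨ ε t = -1) →
        ∃ ρ : Matrix (Fin N) (Fin N) ℂ,
          ρ.PosSemidef ∧ ρ.trace = 1 ∧ ρ.rank = 1 ∧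
          ∀ t : Fin T,
            ε t * ((Matrix.trace (E * ρ)).re - v t (fun s => ε ⟨s.1, s.2.trans t.2⟩)) ≥ δ := by
  refine ⟨fun t x => 1 / 2 + ∑ s : Fin t.1, x s / 2 ^ (s.1 + 2), fun ε hε => ?_⟩
  set e : ℕ → ℝ := fun s => if h : s < T then ε ⟨s, h⟩ else 1
  have he : ∀ s, |e s| = 1 := fun s => by
    by_cases h : s < T
    · rcases hε ⟨s, h⟩ with h' | h' <;> simp [e, h, h']
    · simp [e, h]
  have hv : ∀ t : Fin T, ∑ s : Fin t.1, ε ⟨s.1, s.2.trans t.2⟩ / 2 ^ (s.1 + 2) =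
      ∑ s ∈ range t, e s / 2 ^ (s + 2) := fun t => by
    rw [← Fin.sum_univ_eq_sum_range (fun s => e s / 2 ^ (s + 2))]
    simp only [e, dif_pos (Fin.is_lt _ |>.trans t.2)]
  have hS := abs_le.mp ((abs_sum_range_div_two_pow_le (fun s => (he s).le) T).trans
    (sub_le_self _ (by positivity)))
  obtain ⟨ρ, ⟨hpsd, htr, hrk⟩, hρ⟩ := Matrix.exists_isPureState_apply_eq
    (i := (⟨0, by omega⟩ : Fin N)) (j := ⟨1, by omega⟩) (by simp)
    (p := 1 / 2 + ∑ s ∈ range T, e s / 2 ^ (s + 2)) (by linarith [hS.1]) (by linarith [hS.2])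
  have hE' : E = Matrix.single ⟨0, by omega⟩ ⟨0, by omega⟩ 1 := by
    subst hE; ext i j; simp [Matrix.single_apply, Fin.ext_iff, eq_comm]
  refine ⟨ρ, hpsd, htr, hrk, fun t => ?_⟩
  dsimp only
  rw [hE', Matrix.trace_single_mul, one_smul, hρ, Complex.ofReal_re, hv, add_sub_add_left_eq_sub,
    ← sum_Ico_eq_sub _ t.2.le, ← show e t = ε t from dif_pos t.2]
  exact hδ.trans (inv_two_pow_le_mul_sum_Ico_div_two_pow he t.2)

/-- For N ≥ 2, T ≥ 1, 0 < δ ≤ 2^{−(T+1)}, and the fixed measurement E with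
    entry 1 at (0,0) and 0 elsewhere, there are witness functions v_t : {−1,1}^{t−1} → ℝ such
    that every sign sequence ε ∈ {−1,1}^T is realized, with margin δ, by a rank-one density
    matrix ρ: ε_t (Re Tr(Eρ) − v_t(ε_1,…,ε_{t−1})) ≥ δ for all t. -/
theorem single_measurement_shattering (N T : ℕ) (hN : 2 ≤ N) (hT : 1 ≤ T)
    (δ : ℝ) (hδ0 : 0 < δ) (hδ : δ ≤ ((2 : ℝ) ^ (T + 1))⁻¹)
    (E : Matrix (Fin N) (Fin N) ℂ)
    (hE : E = fun i j => if i.1 = 0 ∧ j.1 = 0 then 1 else 0) :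
    ∃ v : (t : Fin T) → (Fin t.1 → ℝ) → ℝ,
      ∀ ε : Fin T → ℝ, (∀ t, ε t = 1 ∨ ε t = -1) →
        ∃ ρ : Matrix (Fin N) (Fin N) ℂ,
          ρ.PosSemidef ∧ ρ.trace = 1 ∧ ρ.rank = 1 ∧
          ∀ t : Fin T,
            ε t * ((Matrix.trace (E * ρ)).re - v t (fun s => ε ⟨s.1, s.2.trans t.2⟩)) ≥ δ :=
  single_measurement_shattering_general N T hN δ hδ E hE
end

section
/- Let N ≥ 2, let 1 ≤ T ≤ N−1 and let 0 < δ ≤ 1/(2(T+1)). For every sign sequence ε ∈ {−1,1}^T define S(ε) = {t ∈ {1,…,T} : ε_t = 1} and K = |S(ε)|, and let ψ(ε) ∈ ℂ^N be the uniform superposition ψ(ε) = (1/√(K+1)) (Σ_{t∈S(ε)} e_{t−1} + e_{N−1}). Then for every ε ∈ {−1,1}^T and every t ∈ {1,…,T}: ε_t · (|⟨e_{t−1}, ψ(ε)⟩|² − 1/(2(T+1))) ≥ δ. Consequently, the class of uniform-superposition pure states δ-shatters sequentially (with constant witness value 1/(2(T+1))) the depth-T sequence of Von Neumann measurements e_0e_0*,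 …, e_{T−1}e_{T−1}*, so its sequential fat-shattering dimension at scale δ against Von Neumann measurements is Ω(min(1/δ, N)). -/
/-!
ψ(ε) is the uniform superposition over the set I = {e_{t-1} : ε_t = 1} ∪ {e_{N-1}}, of size K + 1 ≤ T + 1.
An index t with ε_t = 1 lies in I and is accepted with probability 1/(K+1) ≥ 1/(T+1), a margin of
1/(2(T+1)) above the threshold; an index with ε_t = -1 lies outside I and is accepted with
probability 0, the same margin below it.
-/

open Finset

section UniformSuperposition

variable {ι : Type*} [DecidableEq ι]

noncomputable def uniformSuperposition (I : Finset ι) (i : ι) : ℂ :=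
  if i ∈ I then ((Real.sqrt #I : ℝ) : ℂ)⁻¹ else 0

theorem norm_sq_uniformSuperposition (I : Finset ι) (i : ι) :
    ‖uniformSuperposition I i‖ ^ 2 = if i ∈ I then (#I : ℝ)⁻¹ else 0 := by
  unfold uniformSuperposition
  split_ifs
  · rw [norm_inv, Complex.norm_real, Real.norm_of_nonneg (Real.sqrt_nonneg _), inv_pow,
      Real.sq_sqrt (Nat.cast_nonneg _)]
  · simp

theorem sum_norm_sq_uniformSuperposition [Fintype ι] {I : Finset ι} (hI : I.Nonempty) :
    ∑ i, ‖uniformSuperposition I i‖ ^ 2 = 1 := by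
  simp_rw [norm_sq_uniformSuperposition, sum_ite_mem, univ_inter, sum_const, nsmul_eq_mul]
  exact mul_inv_cancel₀ (Nat.cast_ne_zero.mpr hI.card_pos.ne')

theorem le_sign_mul_norm_sq_uniformSuperposition_sub {I : Finset ι} {i : ι} {m ε : ℝ}
    (hIm : (#I : ℝ) ≤ m) (hε : ε = if i ∈ I then 1 else -1) :
    1 / (2 * m) ≤ ε * (‖uniformSuperposition I i‖ ^ 2 - 1 / (2 * m)) := by
  rw [norm_sq_uniformSuperposition]
  split_ifs at hε ⊢ with hi
  · have hI : (0 : ℝ) < #I := Nat.cast_pos.mpr (card_pos.mpr ⟨i, hi⟩)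
    have : m⁻¹ ≤ (#I : ℝ)⁻¹ := inv_anti₀ hI hIm
    rw [hε, one_div, mul_inv]
    linarith
  · rw [hε]
    exact le_of_eq (by ring)

end UniformSuperposition

namespace Fin

variable {T N : ℕ}

def castLEInsertLast (hTN : T < N) (s : Finset (Fin T)) : Finset (Fin N) :=
  insert ⟨N - 1, by omega⟩ (s.map (castLEEmb hTN.le))

theorem mem_castLEInsertLast {hTN : T < N} {s : Finset (Fin T)} {i : Fin N} :
    i ∈ castLEInsertLast hTN s ↔ i.1 = N - 1 ∨ ∃ h : i.1 < T, ⟨i.1, h⟩ ∈ s := by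
  simp only [castLEInsertLast, mem_insert, mem_map, coe_castLEEmb, Fin.ext_iff]
  constructor
  · rintro (h | ⟨j, hj, hji⟩)
    · exact .inl h
    · rw [← hji]
      exact .inr ⟨j.2, hj⟩
  · rintro (h | ⟨h, hi⟩)
    · exact .inl h
    · exact .inr ⟨_, hi, rfl⟩

theorem card_castLEInsertLast (hTN : T < N) (s : Finset (Fin T)) :
    #(castLEInsertLast hTN s) = #s + 1 := by
  rw [castLEInsertLast, card_insert_of_notMem, card_map]
  simp only [mem_map, coe_castLEEmb, not_exists, not_and, Fin.ext_iff, val_castLE]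
  omega

end Fin

theorem uniform_superposition_shattering_general (N T : ℕ) (hN : 2 ≤ N)
    (hTN : T ≤ N - 1) (δ : ℝ) (hδ : δ ≤ 1 / (2 * ((T : ℝ) + 1))) :
    ∀ ε : Fin T → ℝ, (∀ t, ε t = 1 ∨ ε t = -1) →
      ∀ K : ℕ, K = (Finset.univ.filter (fun s : Fin T => ε s = 1)).card →
        ∀ ψ : Fin N → ℂ,
          (∀ i : Fin N, ψ i =
            if i.1 = N - 1 then ((Real.sqrt (K + 1) : ℝ) : ℂ)⁻¹
            else if h : i.1 < T then
              (if ε ⟨i.1, h⟩ = 1 then ((Real.sqrt (K + 1) : ℝ) : ℂ)⁻¹ else 0)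
            else 0) →
          (∑ i, ‖ψ i‖ ^ 2 = 1) ∧
          ∀ t : Fin T,
            ε t * (‖ψ ⟨t.1, lt_of_lt_of_le t.2 (hTN.trans (Nat.sub_le N 1))⟩‖ ^ 2
              - 1 / (2 * ((T : ℝ) + 1))) ≥ δ := by
  classical
  intro ε hε K hK ψ hψ
  have hTN' : T < N := by omega
  set I := Fin.castLEInsertLast hTN' (univ.filter fun s => ε s = 1)
  have hcard : #I = K + 1 := by rw [Fin.card_castLEInsertLast, hK]
  have hmem : ∀ i, i ∈ I ↔ i.1 = N - 1 ∨ ∃ h : i.1 < T, ε ⟨i.1, h⟩ = 1 := fun i => by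
    simp only [I, Fin.mem_castLEInsertLast, mem_filter_univ]
  have hψI : ψ = uniformSuperposition I := funext fun i => by
    simp only [hψ, uniformSuperposition, hmem, hcard]
    push_cast
    split_ifs <;> simp_all
  subst hψI
  refine ⟨sum_norm_sq_uniformSuperposition ⟨_, mem_insert_self _ _⟩, fun t => ?_⟩
  have hIT : (#I : ℝ) ≤ T + 1 := by
    rw [hcard, hK]
    exact_mod_cast Nat.succ_le_succ ((card_filter_le _ _).trans_eq (card_fin T))
  refine hδ.trans (le_sign_mul_norm_sq_uniformSuperposition_sub hIT ?_)
  simp only [hmem]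
  rcases hε t with h | h <;> simp [h, show t.1 ≠ N - 1 by omega]

/-- For N ≥ 2, 1 ≤ T ≤ N−1 and 0 < δ ≤ 1/(2(T+1)), the explicit uniform
    superposition ψ(ε) = (1/√(K+1)) (Σ_{t : ε_t = 1} e_{t−1} + e_{N−1}) (K the number of +1
    signs) is a unit vector and satisfies, for every t,
    ε_t (|⟨e_{t−1}, ψ(ε)⟩|² − 1/(2(T+1))) ≥ δ. -/
theorem uniform_superposition_shattering (N T : ℕ) (hN : 2 ≤ N) (hT1 : 1 ≤ T)
    (hTN : T ≤ N - 1) (δ : ℝ) (hδ0 : 0 < δ) (hδ : δ ≤ 1 / (2 * ((T : ℝ) + 1))) :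
    ∀ ε : Fin T → ℝ, (∀ t, ε t = 1 ∨ ε t = -1) →
      ∀ K : ℕ, K = (Finset.univ.filter (fun s : Fin T => ε s = 1)).card →
        ∀ ψ : Fin N → ℂ,
          (∀ i : Fin N, ψ i =
            if i.1 = N - 1 then ((Real.sqrt (K + 1) : ℝ) : ℂ)⁻¹
            else if h : i.1 < T then
              (if ε ⟨i.1, h⟩ = 1 then ((Real.sqrt (K + 1) : ℝ) : ℂ)⁻¹ else 0)
            else 0) →
          (∑ i, ‖ψ i‖ ^ 2 = 1) ∧
          ∀ t : Fin T,
            ε t * (‖ψ ⟨t.1, lt_of_lt_of_le t.2 (hTN.trans (Nat.sub_le N 1))⟩‖ ^ 2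
              - 1 / (2 * ((T : ℝ) + 1))) ≥ δ :=
  uniform_superposition_shattering_general N T hN hTN δ hδ
end

section
/- Let n ≥ 1, N = 2^n, T ≥ 1CURRENT, and 0 < δ ≤ 2^{−(n+T+1)}. Set D = T(N−1) and, for t ∈ {1,…,D}, set i(t) = ⌊(t−1)/T⌋. Then there exist functions v_t : {−1,1}^{t−1} → ℝ (t = 1,…,D) such that for every sign sequence ε ∈ {−1,1}^D there exists a unit vector ψ ∈ ℂ^N satisfying ε_t · (|⟨e_{i(t)}, ψ⟩|² − v_t(ε_1,…,ε_{t−1})) ≥ δ for all t ∈ {1,…,D}. That is, the class of N-dimensional pure states δ-shatters sequentially a tree of depth T(2^n − 1) whose measurement labels are the Von Neumann measurements e_{i(t)}e_{i(t)}*. -/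
/-!
Spend the first `N - 1` basis vectors one each on blocks of `T` consecutive measurements and let
the last one absorb the leftover mass. Within a block, the thresholds `v_t` run a binary search
for a number in `[0, 1]`: the `k`-th sign moves the current midpoint by `±2^{-(k+2)}`. Since the
later moves add up to less than `2^{-(k+2)}`, the endpoint of the search stays on the side of the
`k`-th threshold prescribed by the `k`-th sign, at distance at least `2^{-(T+1)}`. Scaling the
search interval down to `[0, 2^{-n}]` keeps the total mass of the first `N - 1` coordinates at
most `1` and turns that distance into `2^{-(n+T+1)}`.
-/

open Finset

/-- The midpoint reached by a binary search in `[0, 1]` after answering `ε 0, …, ε (k - 1)`. -/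
noncomputable def dyadicPoint (ε : ℕ → ℝ) (k : ℕ) : ℝ :=
  2⁻¹ + ∑ s ∈ range k, ε s * ((2 : ℝ) ^ (s + 2))⁻¹

section DyadicPoint

variable {ε : ℕ → ℝ}

lemma dyadicPoint_congr {η : ℕ → ℝ} {k : ℕ} (h : ∀ s < k, ε s = η s) :
    dyadicPoint ε k = dyadicPoint η k := by
  unfold dyadicPoint
  congr 1
  exact sum_congr rfl fun s hs => by rw [h s (mem_range.mp hs)]

lemma abs_sum_Ico_mul_inv_two_pow_le (hε : ∀ s, |ε s| ≤ 1) {k m : ℕ} (hkm : k ≤ m) :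
    |∑ s ∈ Ico k m, ε s * ((2 : ℝ) ^ (s + 2))⁻¹| ≤ ((2 : ℝ) ^ (k + 1))⁻¹ - ((2 : ℝ) ^ (m + 1))⁻¹ := by
  induction m, hkm using Nat.le_induction with
  | base => simp
  | succ m hkm ih =>
    rw [sum_Ico_succ_top hkm]
    have hterm : |ε m * ((2 : ℝ) ^ (m + 2))⁻¹| ≤ ((2 : ℝ) ^ (m + 2))⁻¹ := by
      have hpos : (0 : ℝ) < ((2 : ℝ) ^ (m + 2))⁻¹ := by positivity
      rw [abs_mul, abs_of_pos hpos]
      exact mul_le_of_le_one_left hpos.le (hε m)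
    have hhalf : ((2 : ℝ) ^ (m + 2))⁻¹ = ((2 : ℝ) ^ (m + 1))⁻¹ / 2 := by
      rw [pow_succ, mul_inv, div_eq_mul_inv]
    linarith [abs_add_le (∑ s ∈ Ico k m, ε s * ((2 : ℝ) ^ (s + 2))⁻¹) (ε m * ((2 : ℝ) ^ (m + 2))⁻¹)]

lemma dyadicPoint_mem_Icc (hε : ∀ s, |ε s| ≤ 1) (m : ℕ) : dyadicPoint ε m ∈ Set.Icc 0 1 := by
  have h := abs_sum_Ico_mul_inv_two_pow_le hε (Nat.zero_le m)
  rw [← range_eq_Ico, zero_add, pow_one, abs_le] at h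
  have hpos : (0 : ℝ) < ((2 : ℝ) ^ (m + 1))⁻¹ := by positivity
  constructor <;> unfold dyadicPoint <;> linarith [h.1, h.2]

lemma inv_two_pow_le_mul_dyadicPoint_sub (hε : ∀ s, |ε s| ≤ 1) {k m : ℕ} (hεk : |ε k| = 1)
    (hkm : k < m) : ((2 : ℝ) ^ (m + 1))⁻¹ ≤ ε k * (dyadicPoint ε m - dyadicPoint ε k) := by
  set S := ∑ s ∈ Ico (k + 1) m, ε s * ((2 : ℝ) ^ (s + 2))⁻¹
  have hsplit : dyadicPoint ε m - dyadicPoint ε k = ε k * ((2 : ℝ) ^ (k + 2))⁻¹ + S := by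
    unfold dyadicPoint
    rw [← sum_range_add_sum_Ico _ hkm.le, sum_eq_sum_Ico_succ_bot hkm]
    ring
  have hS : |S| ≤ ((2 : ℝ) ^ (k + 2))⁻¹ - ((2 : ℝ) ^ (m + 1))⁻¹ :=
    abs_sum_Ico_mul_inv_two_pow_le hε hkm
  have hεkS : -|S| ≤ ε k * S := by
    have := neg_abs_le (ε k * S)
    rwa [abs_mul, hεk, one_mul] at this
  have hεk_sq : ε k * ε k = 1 := by rw [← abs_mul_abs_self, hεk, one_mul]
  calc ((2 : ℝ) ^ (m + 1))⁻¹ ≤ ((2 : ℝ) ^ (k + 2))⁻¹ - |S| := by linarith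
    _ ≤ (ε k * ε k) * ((2 : ℝ) ^ (k + 2))⁻¹ + ε k * S := by rw [hεk_sq]; linarith
    _ = ε k * (dyadicPoint ε m - dyadicPoint ε k) := by rw [hsplit]; ring

end DyadicPoint

lemma exists_sum_norm_sq_eq_one_and_norm_sq_eq {ι : Type*} [Fintype ι] [DecidableEq ι] (i₀ : ι)
    {p : ι → ℝ} (hp : ∀ i, 0 ≤ p i) (hsum : ∑ i ∈ univ.erase i₀, p i ≤ 1) :
    ∃ ψ : ι → ℂ, ∑ i, ‖ψ i‖ ^ 2 = 1 ∧ ∀ i ≠ i₀, ‖ψ i‖ ^ 2 = p i := by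
  set q := Function.update p i₀ (1 - ∑ i ∈ univ.erase i₀, p i)
  have hq : ∀ i, 0 ≤ q i := fun i => by
    rcases eq_or_ne i i₀ with rfl | hi
    · simpa [q] using hsum
    · simpa [q, hi] using hp i
  have hnorm : ∀ i, ‖((√(q i) : ℝ) : ℂ)‖ ^ 2 = q i := fun i => by
    rw [Complex.norm_real, Real.norm_eq_abs, sq_abs, Real.sq_sqrt (hq i)]
  refine ⟨fun i => ((√(q i) : ℝ) : ℂ), ?_, fun i hi => by simpa [q, hi] using hnorm i⟩
  simp only [hnorm]
  rw [← add_sum_erase _ _ (mem_univ i₀)]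
  have herase : ∑ i ∈ univ.erase i₀, q i = ∑ i ∈ univ.erase i₀, p i :=
    sum_congr rfl fun i hi => by simp [q, ne_of_mem_erase hi]
  rw [herase]
  simp [q]

lemma abs_extend_val_le_one {D : ℕ} {ε : Fin D → ℝ} (hε : ∀ t, ε t = 1 ∨ ε t = -1) (j : ℕ) :
    |Function.extend Fin.val ε 0 j| ≤ 1 := by
  by_cases hj : ∃ t : Fin D, t.val = j
  · obtain ⟨t, rfl⟩ := hj
    rw [Fin.val_injective.extend_apply]
    rcases hε t with h | h <;> simp [h]
  · simp [Function.extend_apply' _ _ _ hj]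

lemma extend_val_restrict {D : ℕ} (ε : Fin D → ℝ) (t : Fin D) {j : ℕ} (hj : j < t.1) :
    Function.extend Fin.val (fun s : Fin t.1 => ε ⟨s.1, s.2.trans t.2⟩) 0 j =
      Function.extend Fin.val ε 0 j :=
  (Fin.val_injective.extend_apply _ 0 (⟨j, hj⟩ : Fin t.1)).trans
    (Fin.val_injective.extend_apply ε 0 (⟨j, hj.trans t.2⟩ : Fin D)).symm

theorem von_neumann_halving_shattering_general (n T N D : ℕ)
    (hN : N = 2 ^ n) (hD : D = T * (N - 1))
    (δ : ℝ) (hδ : δ ≤ ((2 : ℝ) ^ (n + T + 1))⁻¹) :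
    ∃ v : (t : Fin D) → (Fin t.1 → ℝ) → ℝ,
      ∀ ε : Fin D → ℝ, (∀ t, ε t = 1 ∨ ε t = -1) →
        ∃ ψ : Fin N → ℂ, (∑ i, ‖ψ i‖ ^ 2 = 1) ∧
          ∀ t : Fin D,
            ε t * (‖ψ ⟨t.1 / T,
                lt_of_lt_of_le
                  (Nat.div_lt_of_lt_mul (lt_of_lt_of_le t.2 (le_of_eq hD)))
                  (Nat.sub_le N 1)⟩‖ ^ 2
              - v t (fun s => ε ⟨s.1, s.2.trans t.2⟩)) ≥ δ := by
  set a : ℝ := ((2 : ℝ) ^ n)⁻¹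
  have ha : 0 ≤ a := by positivity
  refine ⟨fun t e =>
    a * dyadicPoint (fun s => Function.extend Fin.val e 0 (t.1 / T * T + s)) (t.1 % T), ?_⟩
  intro ε hε
  set ε' := Function.extend Fin.val ε 0
  have hε' (j : ℕ) : |ε' j| ≤ 1 := abs_extend_val_le_one hε j
  set p : Fin N → ℝ := fun i => a * dyadicPoint (fun s => ε' (i.1 * T + s)) T
  have hp (i : Fin N) : 0 ≤ p i := mul_nonneg ha (dyadicPoint_mem_Icc (fun _ => hε' _) T).1
  have hN0 : 0 < N := hN ▸ Nat.two_pow_pos n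
  have hp_sum : ∑ i ∈ univ.erase ⟨N - 1, by omega⟩, p i ≤ 1 := by
    calc ∑ i ∈ univ.erase ⟨N - 1, _⟩, p i ≤ ∑ i, p i :=
          sum_le_sum_of_subset_of_nonneg (erase_subset _ _) fun i _ _ => hp i
      _ ≤ ∑ _i : Fin N, a :=
          sum_le_sum fun i _ => mul_le_of_le_one_right ha (dyadicPoint_mem_Icc (fun _ => hε' _) T).2
      _ = 1 := by simp [a, hN]
  obtain ⟨ψ, hψ_unit, hψ⟩ := exists_sum_norm_sq_eq_one_and_norm_sq_eq _ hp hp_sum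
  refine ⟨ψ, hψ_unit, fun t => ?_⟩
  have hTpos : 0 < T := Nat.pos_of_ne_zero fun hT => by simpa [hT, hD] using t.2
  have hblock : t.1 / T * T + t.1 % T = t.1 := Nat.div_add_mod' _ _
  have hεt : ε' (t.1 / T * T + t.1 % T) = ε t := by
    rw [hblock]
    exact Fin.val_injective.extend_apply ε 0 t
  beta_reduce
  rw [hψ _ (Fin.ne_of_val_ne (Nat.div_lt_of_lt_mul (hD ▸ t.2)).ne),
    dyadicPoint_congr fun s hs => extend_val_restrict ε t (by omega)]
  have hmargin := inv_two_pow_le_mul_dyadicPoint_sub (fun _ => hε' _)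
    (by rw [hεt]; rcases hε t with h | h <;> simp [h]) (Nat.mod_lt t.1 hTpos)
  rw [hεt] at hmargin
  calc δ ≤ a * ((2 : ℝ) ^ (T + 1))⁻¹ := by rwa [← mul_inv, ← pow_add, ← add_assoc]
    _ ≤ a * (ε t * (dyadicPoint (fun s => ε' (t.1 / T * T + s)) T -
          dyadicPoint (fun s => ε' (t.1 / T * T + s)) (t.1 % T))) :=
        mul_le_mul_of_nonneg_left hmargin ha
    _ = _ := by ring

/-- For n ≥ 1, N = 2^n, T ≥ 1 and 0 < δ ≤ 2^{−(n+T+1)}, with D = T(N−1) and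
    i(t) = ⌊(t−1)/T⌋ (0-based: i(t) = t/T), there are witness functions
    v_t : {−1,1}^{t−1} → ℝ such that every sign sequence ε ∈ {−1,1}^D is realized, with margin
    δ, by a pure state ψ ∈ ℂ^N: ε_t (|⟨e_{i(t)}, ψ⟩|² − v_t(ε_1,…,ε_{t−1})) ≥ δ for all t. -/
theorem von_neumann_halving_shattering (n T N D : ℕ) (hn : 1 ≤ n) (hT : 1 ≤ T)
    (hN : N = 2 ^ n) (hD : D = T * (N - 1))
    (δ : ℝ) (hδ0 : 0 < δ) (hδ : δ ≤ ((2 : ℝ) ^ (n + T + 1))⁻¹) :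
    ∃ v : (t : Fin D) → (Fin t.1 → ℝ) → ℝ,
      ∀ ε : Fin D → ℝ, (∀ t, ε t = 1 ∨ ε t = -1) →
        ∃ ψ : Fin N → ℂ, (∑ i, ‖ψ i‖ ^ 2 = 1) ∧
          ∀ t : Fin D,
            ε t * (‖ψ ⟨t.1 / T,
                lt_of_lt_of_le
                  (Nat.div_lt_of_lt_mul (lt_of_lt_of_le t.2 (le_of_eq hD)))
                  (Nat.sub_le N 1)⟩‖ ^ 2
              - v t (fun s => ε ⟨s.1, s.2.trans t.2⟩)) ≥ δ :=
  von_neumann_halving_shattering_general n T N D hN hD δ hδ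
end

section
/- For every η with 0 < η < 1 there exist a constant c > 0 and n₀ ∈ ℕ such that for every n ≥ n₀ the following holds with N = 2^n and δ = 2^{−n/η}: there exist a natural number D ≥ c · n · δ^{−η}, a sequence of Von Neumann measurements x_1,…,x_D with each x_t ∈ {e_ie_i* : 0 ≤ i ≤ N−1}, and functions v_t : {−1,1}^{t−1} → ℝ (t = 1,…,D), such that for every sign sequence ε ∈ {−1,1}^D there exists a unit vector ψ ∈ ℂ^N with ε_t · (Re⟨ψ, x_tψ⟩ − v_t(ε_1,…,ε_{t−1})) ≥ δ for all t ∈ {1,…,D}. In words: the sequential fat-shattering dimension of n-qubit pure states against Von Neumann measurements at scale δ = 2^{−n/η} is Ω(n/δ^η) for every η < 1. -/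
open Matrix

/-!
A single amplitude `p` can answer `d` sequential threshold queries by binary search:
`p = 2^d δ (1 + ∑ₖ εₖ 2^{-(k+1)})` lies in `[0, 2^(d+1) δ]`, and the threshold of the `j`-th
query is the same expression truncated after the signs already revealed. The untruncated tail
after position `j` is smaller than the `j`-th term by exactly `2^{-d}`, so each answer clears its
threshold by `δ`. Running independent searches on the `N - 1` amplitudes of `e₁, …, e_{N-1}`
(the rest of the mass sits on `e₀`) shatters `(N - 1) d` measurements as long as
`(N - 1) 2^(d+1) δ ≤ 1`; with `δ = 2^{-n/η}` this allows `d ≈ n (1 - η) / (2η)`, hence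
`D = Ω(n 2^n) = Ω(n δ^{-η})`.
-/

open Finset

def SeqShatters {α : Type*} {D : ℕ} (C : Set α) (f : Fin D → α → ℝ) (δ : ℝ) : Prop :=
  ∃ v : (t : Fin D) → (Fin t.1 → ℝ) → ℝ, ∀ ε : Fin D → ℝ, (∀ t, ε t = 1 ∨ ε t = -1) →
    ∃ a ∈ C, ∀ t, ε t * (f t a - v t fun s => ε ⟨s.1, s.2.trans t.2⟩) ≥ δ

theorem sum_Ico_half_pow_succ {a d : ℕ} (h : a ≤ d) :
    ∑ k ∈ Ico a d, (1 / 2 : ℝ) ^ (k + 1) = (1 / 2) ^ a - (1 / 2) ^ d := by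
  induction d, h using Nat.le_induction with
  | base => simp
  | succ d had ih => rw [sum_Ico_succ_top had, ih]; ring

theorem abs_sum_sign_mul_le {ε : ℕ → ℝ} (hε : ∀ k, ε k = 1 ∨ ε k = -1) (s : Finset ℕ)
    {w : ℕ → ℝ} (hw : ∀ k, 0 ≤ w k) : |∑ k ∈ s, ε k * w k| ≤ ∑ k ∈ s, w k := by
  refine (abs_sum_le_sum_abs _ _).trans (sum_le_sum fun k _ => ?_)
  rcases hε k with h | h <;> simp [h, abs_of_nonneg (hw k)]

theorem pow_half_le_sign_mul_sum_Ico {ε : ℕ → ℝ} (hε : ∀ k, ε k = 1 ∨ ε k = -1) {j d : ℕ}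
    (hj : j < d) : (1 / 2 : ℝ) ^ d ≤ ε j * ∑ k ∈ Ico j d, ε k * (1 / 2) ^ (k + 1) := by
  have htail := abs_sum_sign_mul_le hε (Ico (j + 1) d) (w := fun k => (1 / 2 : ℝ) ^ (k + 1))
    (fun k => by positivity)
  rw [sum_Ico_half_pow_succ hj, Nat.succ_eq_add_one] at htail
  have hsq : ε j * ε j = 1 := by rcases hε j with h | h <;> simp [h]
  have habs : |ε j| = 1 := by rcases hε j with h | h <;> simp [h]
  have hlower := neg_abs_le (ε j * ∑ k ∈ Ico (j + 1) d, ε k * (1 / 2 : ℝ) ^ (k + 1))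
  rw [abs_mul, habs, one_mul] at hlower
  rw [sum_eq_sum_Ico_succ_bot hj, mul_add, ← mul_assoc, hsq, one_mul]
  linarith

theorem seqShatters_Icc (d : ℕ) {δ : ℝ} (hδ : 0 ≤ δ) :
    SeqShatters (Set.Icc 0 (2 ^ (d + 1) * δ)) (fun (_ : Fin d) p => p) δ := by
  refine ⟨fun j h => 2 ^ d * δ * (1 + ∑ k : Fin j, h k * (1 / 2) ^ (k.1 + 1)), fun ε hε => ?_⟩
  set e : ℕ → ℝ := fun k => if hk : k < d then ε ⟨k, hk⟩ else 1
  have he : ∀ k, e k = 1 ∨ e k = -1 := fun k => by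
    by_cases hk : k < d
    · simpa [e, hk] using hε ⟨k, hk⟩
    · simp [e, hk]
  have hprefix (j : Fin d) : ∑ k : Fin j, ε ⟨k, k.2.trans j.2⟩ * (1 / 2 : ℝ) ^ (k.1 + 1)
      = ∑ k ∈ range j, e k * (1 / 2) ^ (k + 1) := by
    rw [← Fin.sum_univ_eq_sum_range]
    exact sum_congr rfl fun k _ => by simp [e, k.2.trans j.2]
  have hbound := abs_sum_sign_mul_le he (range d) (w := fun k => (1 / 2 : ℝ) ^ (k + 1))
    (fun k => by positivity)
  rw [range_eq_Ico, sum_Ico_half_pow_succ d.zero_le, ← range_eq_Ico, pow_zero] at hbound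
  obtain ⟨hlo, hhi⟩ := abs_le.mp hbound
  have hhalf : (0 : ℝ) ≤ (1 / 2) ^ d := by positivity
  refine ⟨2 ^ d * δ * (1 + ∑ k ∈ range d, e k * (1 / 2) ^ (k + 1)), ⟨?_, ?_⟩, fun j => ?_⟩
  · exact mul_nonneg (by positivity) (by linarith)
  · rw [show (2 : ℝ) ^ (d + 1) * δ = 2 ^ d * δ * 2 by ring]
    exact mul_le_mul_of_nonneg_left (by linarith) (by positivity)
  · have hej : ε j = e j := by simp [e]
    simp only [hprefix, hej]
    rw [← sum_range_add_sum_Ico _ j.2.le]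
    calc δ = 2 ^ d * δ * (1 / 2) ^ d := by rw [mul_right_comm, ← mul_pow]; simp
      _ ≤ 2 ^ d * δ * (e j * ∑ k ∈ Ico j.1 d, e k * (1 / 2) ^ (k + 1)) :=
        mul_le_mul_of_nonneg_left (pow_half_le_sign_mul_sum_Ico he j.2) (by positivity)
      _ = _ := by ring

theorem Fin.divNat_mul_add_lt {m d : ℕ} (t : Fin (m * d)) {s : ℕ} (hs : s < t.modNat) :
    t.divNat * d + s < t := by
  have := Nat.div_add_mod' t.1 d
  simp only [Fin.coe_divNat, Fin.coe_modNat] at hs ⊢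
  omega

theorem SeqShatters.pi {α : Type*} {C : Set α} {d : ℕ} {f : Fin d → α → ℝ} {δ : ℝ}
    (h : SeqShatters C f δ) (m : ℕ) :
    SeqShatters (Set.univ.pi fun _ : Fin m => C) (fun t a => f t.modNat (a t.divNat)) δ := by
  obtain ⟨v, hv⟩ := h
  refine ⟨fun t h => v t.modNat fun s => h ⟨t.divNat * d + s, t.divNat_mul_add_lt s.2⟩,
    fun ε hε => ?_⟩
  choose a ha hsep using fun i : Fin m => hv (fun j => ε (finProdFinEquiv (i, j))) fun j => hε _
  refine ⟨a, fun i _ => ha i, fun t => ?_⟩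
  have ht : finProdFinEquiv (t.divNat, t.modNat) = t := by
    rw [← finProdFinEquiv_symm_apply, Equiv.apply_symm_apply]
  convert hsep t.divNat t.modNat using 4
  · rw [ht]
  · funext s
    simp [finProdFinEquiv, mul_comm, add_comm]

theorem SeqShatters.of_mapsTo {α β : Type*} {D : ℕ} {C : Set α} {C' : Set β}
    {f : Fin D → α → ℝ} {f' : Fin D → β → ℝ} {δ : ℝ} (h : SeqShatters C f δ) (g : α → β)
    (hg : Set.MapsTo g C C') (hf : ∀ t, ∀ a ∈ C, f' t (g a) = f t a) : SeqShatters C' f' δ := by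
  obtain ⟨v, hv⟩ := h
  refine ⟨v, fun ε hε => ?_⟩
  obtain ⟨a, ha, hsep⟩ := hv ε hε
  exact ⟨g a, hg ha, fun t => hf t a ha ▸ hsep t⟩

def basisProjection {N : ℕ} (i : Fin N) : Matrix (Fin N) (Fin N) ℂ :=
  fun a b => if a = i ∧ b = i then 1 else 0

theorem re_star_dotProduct_basisProjection_mulVec {N : ℕ} (i : Fin N) (ψ : Fin N → ℂ) :
    (star ψ ⬝ᵥ basisProjection i *ᵥ ψ).re = ‖ψ i‖ ^ 2 := by
  simp only [basisProjection, mulVec, dotProduct, ite_and]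
  simp [Complex.sq_norm, Complex.normSq_apply]

noncomputable def pureStateOf {m : ℕ} (p : Fin m → ℝ) : Fin (m + 1) → ℂ :=
  Fin.cons (√(1 - ∑ i, p i) : ℂ) fun i => (√(p i) : ℂ)

theorem norm_sq_ofReal_sqrt {r : ℝ} (hr : 0 ≤ r) : ‖(√r : ℂ)‖ ^ 2 = r := by
  rw [Complex.norm_real, Real.norm_eq_abs, sq_abs, Real.sq_sqrt hr]

theorem sum_norm_pureStateOf_sq {m : ℕ} {p : Fin m → ℝ} (hp : ∀ i, 0 ≤ p i)
    (hsum : ∑ i, p i ≤ 1) : ∑ i, ‖pureStateOf p i‖ ^ 2 = 1 := by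
  simp only [Fin.sum_univ_succ, pureStateOf, Fin.cons_zero, Fin.cons_succ,
    norm_sq_ofReal_sqrt (sub_nonneg.mpr hsum), norm_sq_ofReal_sqrt (hp _)]
  ring

theorem seqShatters_pureStates_basisProjection (m d : ℕ) {δ : ℝ} (hδ : 0 ≤ δ)
    (hsize : m * (2 ^ (d + 1) * δ) ≤ 1) :
    SeqShatters {ψ : Fin (m + 1) → ℂ | ∑ i, ‖ψ i‖ ^ 2 = 1}
      (fun (t : Fin (m * d)) ψ => (star ψ ⬝ᵥ basisProjection t.divNat.succ *ᵥ ψ).re) δ := by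
  refine ((seqShatters_Icc d hδ).pi m).of_mapsTo pureStateOf (fun p hp => ?_) fun t p hp => ?_
  · have hsum : ∑ i, p i ≤ 1 :=
      calc ∑ i, p i ≤ ∑ _i : Fin m, 2 ^ (d + 1) * δ := sum_le_sum fun i _ => (hp i trivial).2
        _ = m * (2 ^ (d + 1) * δ) := by simp
        _ ≤ 1 := hsize
    exact sum_norm_pureStateOf_sq (fun i => (hp i trivial).1) hsum
  · rw [re_star_dotProduct_basisProjection_mulVec, pureStateOf, Fin.cons_succ,
      norm_sq_ofReal_sqrt (hp _ trivial).1]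

theorem exists_search_depth {η : ℝ} (hη0 : 0 < η) (hη1 : η < 1) :
    ∃ c > 0, ∃ n₀ : ℕ, ∀ n ≥ n₀, ∃ d : ℕ,
      ((2 : ℝ) ^ n - 1) * (2 ^ (d + 1) * 2 ^ (-(n : ℝ) / η)) ≤ 1 ∧
        c * n * 2 ^ n ≤ ((2 : ℝ) ^ n - 1) * d := by
  have hη' : 0 < 1 - η := by linarith
  refine ⟨(1 - η) / (8 * η), by positivity, ⌈4 * η / (1 - η)⌉₊, fun n hn => ?_⟩
  set B : ℝ := n * (1 - η) / (2 * η)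
  have hB : 2 ≤ B := by
    have := Nat.ceil_le.mp hn
    rw [div_le_iff₀ hη'] at this
    rw [le_div_iff₀ (by positivity)]
    linarith
  have hdB : (⌊B⌋₊ : ℝ) ≤ B := Nat.floor_le (by linarith)
  have hBd : B < ⌊B⌋₊ + 1 := Nat.lt_floor_add_one B
  have h2n : (2 : ℝ) ≤ 2 ^ n := by
    have hn0 : n ≠ 0 := by
      rintro rfl
      norm_num [B] at hB
    exact_mod_cast Nat.le_self_pow hn0 2
  refine ⟨⌊B⌋₊, ?_, ?_⟩
  · have hexp : (n : ℝ) + (⌊B⌋₊ + 1) + -(n : ℝ) / η ≤ 0 := by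
      have : (n : ℝ) - n / η = -(2 * B) := by simp only [B]; field_simp; ring
      rw [neg_div]; linarith
    calc ((2 : ℝ) ^ n - 1) * (2 ^ (⌊B⌋₊ + 1) * 2 ^ (-(n : ℝ) / η))
        ≤ 2 ^ (n : ℝ) * (2 ^ ((⌊B⌋₊ : ℝ) + 1) * 2 ^ (-(n : ℝ) / η)) := by
          rw [Real.rpow_natCast, ← Real.rpow_natCast 2 (⌊B⌋₊ + 1)]
          push_cast
          gcongr
          linarith
      _ = 2 ^ ((n : ℝ) + (⌊B⌋₊ + 1) + -(n : ℝ) / η) := by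
          simp only [Real.rpow_add two_pos]
          ring
      _ ≤ 1 := Real.rpow_le_one_of_one_le_of_nonpos one_le_two hexp
  · calc (1 - η) / (8 * η) * n * 2 ^ n = (2 ^ n / 2) * (B / 2) := by simp only [B]; field_simp; ring
      _ ≤ ((2 : ℝ) ^ n - 1) * ⌊B⌋₊ := by gcongr <;> linarith

/-- For every 0 < η < 1 there are c > 0 and n₀ such that for all n ≥ n₀, with
    N = 2^n and δ = 2^{−n/η}, the class of N-dimensional pure states δ-shatters sequentially
    a sequence of D ≥ c·n·δ^{−η} Von Neumann measurements (projections onto standard basis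
    vectors). -/
theorem pure_states_von_neumann_sfat_lower (η : ℝ) (hη0 : 0 < η) (hη1 : η < 1) :
    ∃ c : ℝ, 0 < c ∧ ∃ n₀ : ℕ, ∀ n : ℕ, n₀ ≤ n →
      ∀ N : ℕ, N = 2 ^ n → ∀ δ : ℝ, δ = (2 : ℝ) ^ (-(n : ℝ) / η) →
        ∃ D : ℕ, (D : ℝ) ≥ c * n * δ ^ (-η) ∧
          ∃ x : Fin D → Matrix (Fin N) (Fin N) ℂ,
            (∀ t : Fin D, ∃ i : Fin N,
              x t = fun a b => if a = i ∧ b = i then 1 else 0) ∧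
            ∃ v : (t : Fin D) → (Fin t.1 → ℝ) → ℝ,
              ∀ ε : Fin D → ℝ, (∀ t, ε t = 1 ∨ ε t = -1) →
                ∃ ψ : Fin N → ℂ, (∑ i, ‖ψ i‖ ^ 2 = 1) ∧
                  ∀ t : Fin D,
                    ε t * ((star ψ ⬝ᵥ (x t).mulVec ψ).re
                      - v t (fun s => ε ⟨s.1, s.2.trans t.2⟩)) ≥ δ := by
  obtain ⟨c, hc, n₀, hdepth⟩ := exists_search_depth hη0 hη1
  refine ⟨c, hc, n₀, fun n hn N hN δ hδ => ?_⟩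
  obtain ⟨d, hsize, hD⟩ := hdepth n hn
  obtain ⟨m, rfl⟩ : ∃ m, N = m + 1 := ⟨N - 1, by have := n.one_le_two_pow; omega⟩
  have hm : (m : ℝ) = 2 ^ n - 1 := by
    rw [eq_sub_iff_add_eq]; exact_mod_cast hN
  have hδη : δ ^ (-η) = 2 ^ n := by
    rw [hδ, ← Real.rpow_mul zero_le_two, ← Real.rpow_natCast]
    congr 1
    field_simp
  refine ⟨m * d, ?_, fun t => basisProjection t.divNat.succ, fun t => ⟨_, rfl⟩,
    seqShatters_pureStates_basisProjection m d (hδ ▸ by positivity) (by rwa [hm, hδ])⟩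
  rw [hδη, Nat.cast_mul, hm]
  exact hD
end

section
/- Let N ≥ 2 and let w_2, …, w_N be real numbers with |w_i| ≤ 1/(2√(N−1)) for all i ∈ {2,…,N}. Then there exists an N×N real symmetric positive semidefinite matrix M of trace 1 such that M_{11} = 1/2, M_{ii} = 1/(2(N−1)) for all i ∈ {2,…,N}, and M_{1i} = M_{i1} = w_i for all i ∈ {2,…,N}. In particular, M (viewed as a complex Hermitian matrix) is an N-dimensional density matrix completing the given partial matrix. -/
/-!
Fill in the missing entries so that the matrix is rank one plus diagonal: with
`v = (a, w₂, …, w_N)`, `a = 1/2`, take `a⁻¹ v vᴴ` and add on the diagonal the Schur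
complements `b_i - |w_i|² / a`, where `b_i = 1/(2(N-1))`. Both summands are positive
semidefinite because the bound on `|w_i|` is exactly `|w_i|² ≤ a b_i = 1/(4(N-1))`.
-/

open ComplexOrder

namespace Matrix

variable {n 𝕜 : Type*} [DecidableEq n] [RCLike 𝕜]

def arrowCompletion (i₀ : n) (a : 𝕜) (b w : n → 𝕜) : Matrix n n 𝕜 :=
  of fun i j =>
    if i = j then (if i = i₀ then a else b i)
    else if i = i₀ then star (w j)
    else if j = i₀ then w i
    else w i * star (w j) / a

variable {i₀ : n} {a : 𝕜} {b w : n → 𝕜}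

@[simp] lemma arrowCompletion_apply_self_self : arrowCompletion i₀ a b w i₀ i₀ = a := by
  simp [arrowCompletion]

lemma arrowCompletion_apply_diag {i : n} (hi : i ≠ i₀) :
    arrowCompletion i₀ a b w i i = b i := by
  simp [arrowCompletion, hi]

lemma arrowCompletion_apply_self_left {i : n} (hi : i ≠ i₀) :
    arrowCompletion i₀ a b w i₀ i = star (w i) := by
  simp [arrowCompletion, hi.symm]

lemma arrowCompletion_apply_self_right {i : n} (hi : i ≠ i₀) :
    arrowCompletion i₀ a b w i i₀ = w i := by
  simp [arrowCompletion, hi]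

lemma map_ofReal_arrowCompletion (i₀ : n) (a : ℝ) (b w : n → ℝ) :
    (arrowCompletion i₀ a b w).map ((↑) : ℝ → 𝕜) =
      arrowCompletion i₀ (a : 𝕜) (fun i => (b i : 𝕜)) (fun i => (w i : 𝕜)) := by
  ext i j
  simp only [arrowCompletion, map_apply, of_apply, apply_ite ((↑) : ℝ → 𝕜)]
  simp

lemma arrowCompletion_eq_smul_vecMulVec_add_diagonal (ha : a ≠ 0) (ha' : star a = a) :
    arrowCompletion i₀ a b w =
      a⁻¹ • vecMulVec (Function.update w i₀ a) (star (Function.update w i₀ a)) +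
        diagonal (fun i => if i = i₀ then 0 else b i - w i * star (w i) / a) := by
  ext i j
  by_cases hi : i = i₀ <;> by_cases hj : j = i₀ <;> by_cases hij : i = j <;>
    simp_all [arrowCompletion, vecMulVec_apply, div_eq_inv_mul, mul_left_comm]

variable [Fintype n]

lemma trace_arrowCompletion :
    (arrowCompletion i₀ a b w).trace = a + ∑ i ∈ Finset.univ.erase i₀, b i := by
  rw [trace, ← Finset.add_sum_erase _ _ (Finset.mem_univ i₀), diag_apply,
    arrowCompletion_apply_self_self]
  congr 1
  exact Finset.sum_congr rfl fun _ hi => arrowCompletion_apply_diag (Finset.ne_of_mem_erase hi)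

lemma posSemidef_arrowCompletion (ha : 0 < a) (hw : ∀ i ≠ i₀, w i * star (w i) ≤ a * b i) :
    (arrowCompletion i₀ a b w).PosSemidef := by
  rw [arrowCompletion_eq_smul_vecMulVec_add_diagonal ha.ne' (IsSelfAdjoint.of_nonneg ha.le)]
  refine ((posSemidef_vecMulVec_self_star _).smul (inv_nonneg.mpr ha.le)).add
    (PosSemidef.diagonal fun i => ?_)
  split_ifs with hi
  · rfl
  · rw [Pi.zero_apply, sub_nonneg, div_le_iff₀ ha, mul_comm (b i)]
    exact hw i hi

lemma posSemidef_map_ofReal_arrowCompletion {a : ℝ} {b w : n → ℝ} (ha : 0 < a)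
    (hw : ∀ i ≠ i₀, w i * w i ≤ a * b i) :
    ((arrowCompletion i₀ a b w).map ((↑) : ℝ → 𝕜)).PosSemidef := by
  rw [map_ofReal_arrowCompletion]
  refine posSemidef_arrowCompletion (RCLike.ofReal_pos.mpr ha) fun i hi => ?_
  rw [RCLike.star_def, RCLike.conj_ofReal, ← RCLike.ofReal_mul, ← RCLike.ofReal_mul]
  exact RCLike.ofReal_le_ofReal.mpr (hw i hi)

end Matrix

open Matrix

lemma mul_self_le_of_abs_le_one_div_two_mul_sqrt {c x : ℝ} (hc : 0 < c)
    (hx : |x| ≤ 1 / (2 * √c)) : x * x ≤ 1 / 2 * (1 / (2 * c)) := by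
  have hsq : x * x ≤ (1 / (2 * √c)) ^ 2 := by
    rw [← abs_mul_abs_self, sq]
    exact mul_self_le_mul_self (abs_nonneg x) hx
  rwa [div_pow, mul_pow, Real.sq_sqrt hc.le, one_pow, show (2 : ℝ) ^ 2 * c = 2 * (2 * c) by ring,
    ← one_div_mul_one_div] at hsq

/-- Any partial symmetric matrix with first diagonal entry 1/2, remaining
    diagonal entries 1/(2(N−1)), and specified first row/column entries w_i with
    |w_i| ≤ 1/(2√(N−1)), can be completed to a real symmetric positive semidefinite trace-1
    matrix; in particular (viewed over ℂ) to a density matrix. -/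
theorem partial_matrix_completion (N : ℕ) (hN : 2 ≤ N) [NeZero N] (w : Fin N → ℝ)
    (hw : ∀ i : Fin N, i ≠ 0 → |w i| ≤ 1 / (2 * Real.sqrt ((N : ℝ) - 1))) :
    ∃ M : Matrix (Fin N) (Fin N) ℝ,
      M.IsSymm ∧ M.PosSemidef ∧ M.trace = 1 ∧
      M 0 0 = 1 / 2 ∧
      (∀ i : Fin N, i ≠ 0 → M i i = 1 / (2 * ((N : ℝ) - 1))) ∧
      (∀ i : Fin N, i ≠ 0 → M 0 i = w i ∧ M i 0 = w i) ∧
      (M.map (Complex.ofReal)).IsHermitian ∧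
      (M.map (Complex.ofReal)).PosSemidef ∧
      (M.map (Complex.ofReal)).trace = 1 := by
  have hN₁ : (0 : ℝ) < N - 1 := by
    rw [sub_pos, Nat.one_lt_cast]
    omega
  set M := arrowCompletion 0 (1 / 2 : ℝ) (fun _ => 1 / (2 * ((N : ℝ) - 1))) w
  have hw' i (hi : i ≠ 0) := mul_self_le_of_abs_le_one_div_two_mul_sqrt hN₁ (hw i hi)
  have hM : M.PosSemidef := posSemidef_arrowCompletion (by norm_num) hw'
  have hMℂ : (M.map Complex.ofReal).PosSemidef :=
    posSemidef_map_ofReal_arrowCompletion (by norm_num) hw'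
  have htrace : M.trace = 1 := by
    rw [trace_arrowCompletion, Finset.sum_const, Finset.card_erase_of_mem (Finset.mem_univ _),
      Finset.card_univ, Fintype.card_fin, nsmul_eq_mul, Nat.cast_pred (NeZero.pos N)]
    field_simp
    ring
  refine ⟨M, isHermitian_iff_isSymm.mp hM.isHermitian, hM, htrace,
    arrowCompletion_apply_self_self, fun i hi => arrowCompletion_apply_diag hi,
    fun i hi => ⟨arrowCompletion_apply_self_left hi, arrowCompletion_apply_self_right hi⟩,
    hMℂ.isHermitian, hMℂ, ?_⟩
  simpa [trace] using congrArg ((↑) : ℝ → ℂ) htrace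
end

section
/- For every η with 0 < η < 2 there exist a constant c > 0 and n₀ ∈ ℕ such that for every n ≥ n₀ the following holds with N = 2^n and δ = 2^{−n/η}: there exist a natural number D ≥ c · n · δ^{−η}, a sequence of two-outcome measurements E^{(1)},…,E^{(D)} on ℂ^N (N×N Hermitian matrices with eigenvalues in [0,1]), and functions v_t : {−1,1}^{t−1} → ℝ (t = 1,…,D), such that for every sign sequence ε ∈ {−1,1}^D there exists an N-dimensional density matrix ρ with ε_t · (Re Tr(E^{(t)}ρ) − v_t(ε_1,…,ε_{t−1})) ≥ δ for all t ∈ {1,…,D}. In words: the sequential fat-shattering dimension of n-qubit mixed states against general two-outcome measurements at scale δ = 2^{−n/η} is Ω(n/δ^η) for every η < 2. -/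
/-!
Index the basis of `ℂ^(m+1)`, `m = 2^n - 1`, by an anchor `0` and `m` further vectors. The
measurement `(1 + |0⟩⟨z| + |z⟩⟨0|) / 2` accepts the pure state
`(|0⟩ + m^{-1/2} ∑ₓ e^{iθₓ} |x+1⟩) / √2` with probability `1/2 + cos θ_z / (2√m)`, so the `m`
numbers `gₓ = cos θₓ ∈ [-1, 1]` can be set independently. Each `gₓ` is pinned down by binary
search: `L ≈ n (1/η - 1/2)` adaptively chosen signed dyadic digits, each answered with margin
`2^{-L} / (2√m) ≥ 2^{-n/η}`. This gives `m L ≳ n 2^n = n δ^{-η}` shattered measurements.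
-/

open ComplexOrder Matrix

namespace SeqFat

noncomputable section

section PairMeasurement

variable {ι : Type*} [DecidableEq ι]

lemma one_add_single_add_single_eq {a z : ι} (haz : a ≠ z) {c : ℂ} (hc : ‖c‖ = 1) :
    1 + single a z c + single z a (star c) =
      diagonal (fun i => if i = a ∨ i = z then 0 else 1) +
        vecMulVec (Pi.single a 1 + Pi.single z (star c))
          (star (Pi.single a 1 + Pi.single z (star c))) := by
  have hcc : starRingEnd ℂ c * c = 1 := by rw [Complex.conj_mul', hc]; simp
  have hcc' : c * starRingEnd ℂ c = 1 := by rw [mul_comm, hcc]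
  have cases (i : ι) : i = a ∨ i = z ∨ (i ≠ a ∧ i ≠ z) := by tauto
  ext i j
  simp only [Matrix.add_apply, one_apply, single_apply, diagonal_apply, vecMulVec_apply,
    Pi.star_apply, Pi.add_apply, Pi.single_apply]
  rcases cases i with rfl | rfl | ⟨hia, hiz⟩ <;> rcases cases j with rfl | rfl | ⟨hja, hjz⟩ <;>
    simp [*, haz.symm, Ne.symm]

lemma posSemidef_one_add_single_add_single [Finite ι] {a z : ι} (haz : a ≠ z) {c : ℂ}
    (hc : ‖c‖ = 1) :
    (1 + single a z c + single z a (star c)).PosSemidef := by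
  rw [one_add_single_add_single_eq haz hc]
  refine .add (posSemidef_diagonal_iff.2 fun i => ?_) (posSemidef_vecMulVec_self_star _)
  split_ifs <;> norm_num

def IsMeasurement (E : Matrix ι ι ℂ) : Prop :=
  E.IsHermitian ∧ E.PosSemidef ∧ (1 - E).PosSemidef

def pairMeasurement (a z : ι) : Matrix ι ι ℂ := (2⁻¹ : ℂ) • (1 + single a z 1 + single z a 1)

lemma one_sub_pairMeasurement (a z : ι) :
    1 - pairMeasurement a z = (2⁻¹ : ℂ) • (1 + single a z (-1) + single z a (star (-1))) := by
  rw [pairMeasurement, star_neg, star_one, ← single_neg, ← single_neg]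
  module

lemma isMeasurement_pairMeasurement [Finite ι] {a z : ι} (haz : a ≠ z) :
    IsMeasurement (pairMeasurement a z) := by
  have half : (0 : ℂ) ≤ 2⁻¹ := by positivity
  have hE : (pairMeasurement a z).PosSemidef := by
    have := posSemidef_one_add_single_add_single haz (c := 1) (by simp)
    rw [star_one] at this
    exact this.smul half
  refine ⟨hE.isHermitian, hE, ?_⟩
  rw [one_sub_pairMeasurement]
  exact (posSemidef_one_add_single_add_single haz (by simp)).smul half

lemma trace_pairMeasurement_mul [Fintype ι] (a z : ι) (B : Matrix ι ι ℂ) :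
    (pairMeasurement a z * B).trace = (B.trace + B z a + B a z) / 2 := by
  simp only [pairMeasurement, smul_mul, add_mul, one_mul, trace_smul, trace_add, trace_single_mul,
    smul_eq_mul]
  ring

end PairMeasurement

section PhaseState

variable {m : ℕ}

def phaseVector (g : Fin m → ℝ) : Fin (m + 1) → ℂ :=
  Fin.cons 1 fun x => ((√m)⁻¹ : ℝ) * Complex.exp (Real.arccos (g x) * Complex.I)

def phaseState (g : Fin m → ℝ) : Matrix (Fin (m + 1)) (Fin (m + 1)) ℂ :=
  (2⁻¹ : ℂ) • vecMulVec (phaseVector g) (star (phaseVector g))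

lemma posSemidef_phaseState (g : Fin m → ℝ) : (phaseState g).PosSemidef :=
  (posSemidef_vecMulVec_self_star _).smul (by positivity)

lemma phaseState_apply (g : Fin m → ℝ) (i j : Fin (m + 1)) :
    phaseState g i j = phaseVector g i * starRingEnd ℂ (phaseVector g j) / 2 := by
  simp [phaseState, vecMulVec_apply, div_eq_inv_mul]

lemma trace_phaseState (hm : m ≠ 0) (g : Fin m → ℝ) : (phaseState g).trace = 1 := by
  have hnorm (x : Fin m) :
      phaseVector g x.succ * starRingEnd ℂ (phaseVector g x.succ) = (m : ℂ)⁻¹ := by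
    rw [Complex.mul_conj', phaseVector, Fin.cons_succ, norm_mul, Complex.norm_exp_ofReal_mul_I,
      Complex.norm_real, Real.norm_eq_abs, abs_of_nonneg (by positivity), mul_one,
      ← Complex.ofReal_pow, inv_pow, Real.sq_sqrt m.cast_nonneg]
    push_cast; rfl
  simp only [trace, diag, phaseState_apply, ← Finset.sum_div, Fin.sum_univ_succ, hnorm]
  simp only [phaseVector, Fin.cons_zero, map_one, mul_one, Finset.sum_const, Finset.card_univ,
    Fintype.card_fin, nsmul_eq_mul]
  field_simp
  norm_num

lemma re_trace_pairMeasurement_mul_phaseState (hm : m ≠ 0) {g : Fin m → ℝ} (hg : ∀ x, |g x| ≤ 1)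
    (x : Fin m) : (pairMeasurement 0 x.succ * phaseState g).trace.re = 1 / 2 + g x / (2 * √m) := by
  have hre : (phaseVector g x.succ).re = g x / √m := by
    rw [phaseVector, Fin.cons_succ, Complex.re_ofReal_mul, Complex.exp_ofReal_mul_I_re,
      Real.cos_arccos (abs_le.1 (hg x)).1 (abs_le.1 (hg x)).2, inv_mul_eq_div]
  have h0 : phaseVector g 0 = 1 := Fin.cons_zero _ _
  rw [trace_pairMeasurement_mul, trace_phaseState hm, phaseState_apply, phaseState_apply, h0]
  simp only [map_one, mul_one, one_mul, Complex.div_ofNat_re, Complex.add_re, Complex.one_re, hre,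
    Complex.conj_re]
  ring

end PhaseState

section Dyadic

def dyadicSum (e : ℕ → ℝ) (k : ℕ) : ℝ := ∑ i ∈ Finset.range k, e i / 2 ^ (i + 1)

variable {e : ℕ → ℝ}

lemma dyadicSum_congr {e' : ℕ → ℝ} {k : ℕ} (h : ∀ i < k, e i = e' i) :
    dyadicSum e k = dyadicSum e' k :=
  Finset.sum_congr rfl fun i hi => by rw [h i (Finset.mem_range.1 hi)]

lemma abs_sum_Ico_div_two_pow_le (he : ∀ i, |e i| ≤ 1) {j k : ℕ} (hjk : j ≤ k) :
    |∑ i ∈ Finset.Ico j k, e i / 2 ^ (i + 1)| ≤ 1 / 2 ^ j - 1 / 2 ^ k := by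
  induction k, hjk using Nat.le_induction with
  | base => simp
  | succ k hjk ih =>
    rw [Finset.sum_Ico_succ_top hjk]
    have hk : |e k / 2 ^ (k + 1)| ≤ 1 / 2 ^ (k + 1) := by
      rw [abs_div, abs_pow, abs_two]
      exact div_le_div_of_nonneg_right (he k) (by positivity)
    calc _ ≤ _ := abs_add_le _ _
      _ ≤ 1 / 2 ^ j - 1 / 2 ^ k + 1 / 2 ^ (k + 1) := add_le_add ih hk
      _ = 1 / 2 ^ j - 1 / 2 ^ (k + 1) := by rw [pow_succ]; ring

lemma abs_dyadicSum_le (he : ∀ i, |e i| ≤ 1) (k : ℕ) : |dyadicSum e k| ≤ 1 := by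
  have := abs_sum_Ico_div_two_pow_le he (Nat.zero_le k)
  rw [← Finset.range_eq_Ico] at this
  exact this.trans (by simp)

lemma le_mul_dyadicSum_sub (he : ∀ i, |e i| ≤ 1) {j L : ℕ} (hj : j < L)
    (hsign : e j = 1 ∨ e j = -1) : 1 / 2 ^ L ≤ e j * (dyadicSum e L - dyadicSum e j) := by
  have hsplit : dyadicSum e L - dyadicSum e j
      = e j / 2 ^ (j + 1) + ∑ i ∈ Finset.Ico (j + 1) L, e i / 2 ^ (i + 1) := by
    rw [dyadicSum, dyadicSum, ← Finset.sum_range_add_sum_Ico _ hj.le, add_sub_cancel_left,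
      Finset.sum_eq_sum_Ico_succ_bot hj]
  have htail := abs_le.1 (abs_sum_Ico_div_two_pow_le he (j := j + 1) hj)
  rw [hsplit]
  rcases hsign with h | h <;> rw [h] <;> linarith [htail.1, htail.2, neg_div ((2 : ℝ) ^ (j + 1)) 1]

end Dyadic

section Shattering

variable {ι : Type*} [Fintype ι]

def SeqShatters {D : ℕ} (δ : ℝ) (E : Fin D → Matrix ι ι ℂ) : Prop :=
  ∃ v : (t : Fin D) → (Fin t.1 → ℝ) → ℝ, ∀ ε : Fin D → ℝ, (∀ t, ε t = 1 ∨ ε t = -1) →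
    ∃ ρ : Matrix ι ι ℂ, ρ.PosSemidef ∧ ρ.trace = 1 ∧
      ∀ t : Fin D, ε t * ((E t * ρ).trace.re - v t (fun s => ε ⟨s.1, s.2.trans t.2⟩)) ≥ δ

lemma SeqShatters.mono {D : ℕ} {δ δ' : ℝ} {E : Fin D → Matrix ι ι ℂ} (h : SeqShatters δ E)
    (hδ : δ' ≤ δ) : SeqShatters δ' E := by
  obtain ⟨v, hv⟩ := h
  refine ⟨v, fun ε hε => ?_⟩
  obtain ⟨ρ, hpsd, htr, hρ⟩ := hv ε hε
  exact ⟨ρ, hpsd, htr, fun t => hδ.trans (hρ t)⟩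

def zeroExtend {k : ℕ} (w : Fin k → ℝ) (s : ℕ) : ℝ := if h : s < k then w ⟨s, h⟩ else 0

/-- Measurement `t = x * L + j` asks for the `j`-th signed binary digit of the phase `g x`. -/
theorem seqShatters_pairMeasurement {m : ℕ} (hm : m ≠ 0) (L : ℕ) :
    SeqShatters (1 / (2 * √m * 2 ^ L))
      (fun t : Fin (m * L) => pairMeasurement (0 : Fin (m + 1)) t.divNat.succ) := by
  refine ⟨fun t w =>
    1 / 2 + dyadicSum (fun j => zeroExtend w (t / L * L + j)) (t % L) / (2 * √m), fun ε hε => ?_⟩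
  set e := zeroExtend ε
  have he (s : ℕ) : |e s| ≤ 1 := by
    unfold e zeroExtend
    split_ifs with h
    · rcases hε ⟨s, h⟩ with h | h <;> simp [h]
    · simp
  set g : Fin m → ℝ := fun x => dyadicSum (fun j => e (x * L + j)) L
  have hg (x : Fin m) : |g x| ≤ 1 := abs_dyadicSum_le (fun j => he _) L
  refine ⟨phaseState g, posSemidef_phaseState g, trace_phaseState hm g, fun t => ?_⟩
  have hL : 0 < L := Nat.pos_of_ne_zero (by rintro rfl; exact absurd t.2 (by simp))
  have hdigit : t / L * L + t % L = t := Nat.div_add_mod' t L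
  have hprefix : dyadicSum (fun j => zeroExtend (fun s : Fin t => ε ⟨s.1, s.2.trans t.2⟩)
      (t / L * L + j)) (t % L) = dyadicSum (fun j => e (t / L * L + j)) (t % L) := by
    refine dyadicSum_congr fun j hj => ?_
    have hjt : t / L * L + j < t := by omega
    simp [e, zeroExtend, hjt, hjt.trans t.2]
  have hεt : ε t = e (t / L * L + t % L) := by simp [e, zeroExtend, hdigit]
  have hbit := le_mul_dyadicSum_sub (e := fun j => e (t / L * L + j)) (fun j => he _)
    (Nat.mod_lt t hL) (hεt ▸ hε t)
  beta_reduce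
  rw [re_trace_pairMeasurement_mul_phaseState hm hg, hprefix, hεt]
  calc 1 / (2 * √m * 2 ^ L) = 1 / 2 ^ L / (2 * √m) := by ring
    _ ≤ e (t / L * L + t % L) * (g t.divNat - dyadicSum (fun j => e (t / L * L + j)) (t % L))
        / (2 * √m) := by gcongr; simpa [g, Fin.coe_divNat] using hbit
    _ = _ := by ring

end Shattering

lemma exists_blockLength {η : ℝ} (hη0 : 0 < η) (hη2 : η < 2) :
    ∃ c : ℝ, 0 < c ∧ ∃ n₀ : ℕ, ∀ n ≥ n₀, 0 < n ∧
      ∃ L : ℕ, c * n * 2 ^ n ≤ ((2 : ℝ) ^ n - 1) * L ∧ (n : ℝ) / 2 + 1 + L ≤ n / η := by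
  set β := 1 / η - 1 / 2
  have hβ : 0 < β := sub_pos.2 (one_div_lt_one_div_of_lt hη0 hη2)
  refine ⟨β / 4, by positivity, ⌈4 / β⌉₊ + 1, fun n hn => ⟨by omega, ?_⟩⟩
  have hnβ : 4 < n * β := by
    have : 4 / β < n := Nat.lt_of_ceil_lt (by omega)
    rwa [div_lt_iff₀ hβ] at this
  refine ⟨⌊n * β - 1⌋₊, ?_, ?_⟩
  · have hL : (n * β - 1) - 1 < ⌊n * β - 1⌋₊ := by linarith [Nat.lt_floor_add_one (n * β - 1)]
    have h2n : (2 : ℝ) ≤ 2 ^ n := le_self_pow₀ (by norm_num) (by omega)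
    calc β / 4 * n * 2 ^ n = (2 ^ n / 2) * (n * β / 2) := by ring
      _ ≤ (2 ^ n - 1) * ⌊n * β - 1⌋₊ := by gcongr <;> linarith
  · have := Nat.floor_le (a := n * β - 1) (by linarith)
    have : (n : ℝ) / η = n / 2 + n * β := by ring
    linarith

lemma two_rpow_neg_le_one_div {m n L : ℕ} (hm : m ≠ 0) (hmn : m ≤ 2 ^ n) {s : ℝ}
    (hs : (n : ℝ) / 2 + 1 + L ≤ s) : (2 : ℝ) ^ (-s) ≤ 1 / (2 * √m * 2 ^ L) := by
  have hsqrt : √(m : ℝ) ≤ 2 ^ ((n : ℝ) / 2) := by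
    calc √(m : ℝ) ≤ √((2 : ℝ) ^ n) := Real.sqrt_le_sqrt (by exact_mod_cast hmn)
      _ = 2 ^ ((n : ℝ) / 2) := by
        rw [Real.sqrt_eq_rpow, ← Real.rpow_natCast, ← Real.rpow_mul zero_le_two]; ring_nf
  have hpow : 2 * √(m : ℝ) * 2 ^ L ≤ 2 ^ ((n : ℝ) / 2 + 1 + L) := by
    rw [Real.rpow_add two_pos, Real.rpow_add two_pos, Real.rpow_one, Real.rpow_natCast]
    nlinarith [mul_le_mul_of_nonneg_right hsqrt (by positivity : (0 : ℝ) ≤ 2 * 2 ^ L)]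
  calc (2 : ℝ) ^ (-s) ≤ 2 ^ (-((n : ℝ) / 2 + 1 + L)) :=
        Real.rpow_le_rpow_of_exponent_le one_le_two (neg_le_neg hs)
    _ = 1 / 2 ^ ((n : ℝ) / 2 + 1 + L) := by rw [Real.rpow_neg zero_le_two, one_div]
    _ ≤ 1 / (2 * √m * 2 ^ L) := by gcongr

end
end SeqFat

open SeqFat in
/-- For every 0 < η < 2 there are c > 0 and n₀ such that for all n ≥ n₀, with
    N = 2^n and δ = 2^{−n/η}, the class of all N-dimensional density matrices δ-shatters
    sequentially a sequence of D ≥ c·n·δ^{−η} two-outcome measurements (Hermitian matrices E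
    with both E and I − E positive semidefinite, i.e. eigenvalues in [0,1]). -/
theorem mixed_states_sfat_lower (η : ℝ) (hη0 : 0 < η) (hη2 : η < 2) :
    ∃ c : ℝ, 0 < c ∧ ∃ n₀ : ℕ, ∀ n : ℕ, n₀ ≤ n →
      ∀ N : ℕ, N = 2 ^ n → ∀ δ : ℝ, δ = (2 : ℝ) ^ (-(n : ℝ) / η) →
        ∃ D : ℕ, (D : ℝ) ≥ c * n * δ ^ (-η) ∧
          ∃ E : Fin D → Matrix (Fin N) (Fin N) ℂ,
            (∀ t : Fin D, (E t).IsHermitian ∧ (E t).PosSemidef ∧ (1 - E t).PosSemidef) ∧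
            ∃ v : (t : Fin D) → (Fin t.1 → ℝ) → ℝ,
              ∀ ε : Fin D → ℝ, (∀ t, ε t = 1 ∨ ε t = -1) →
                ∃ ρ : Matrix (Fin N) (Fin N) ℂ, ρ.PosSemidef ∧ ρ.trace = 1 ∧
                  ∀ t : Fin D,
                    ε t * ((Matrix.trace (E t * ρ)).re
                      - v t (fun s => ε ⟨s.1, s.2.trans t.2⟩)) ≥ δ := by
  obtain ⟨c, hc, n₀, hn₀⟩ := exists_blockLength hη0 hη2
  refine ⟨c, hc, n₀, fun n hn N hN δ hδ => ?_⟩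
  obtain ⟨hn, L, hcount, hscale⟩ := hn₀ n hn
  obtain ⟨m, rfl⟩ : ∃ m, N = m + 1 := ⟨N - 1, by have := Nat.one_le_two_pow (n := n); omega⟩
  have hm : m ≠ 0 := by have := Nat.one_lt_two_pow hn.ne'; omega
  have hδη : δ ^ (-η) = 2 ^ n := by
    rw [hδ, ← Real.rpow_mul zero_le_two, show -(n : ℝ) / η * -η = n by field_simp,
      Real.rpow_natCast]
  refine ⟨m * L, ?_, fun t => pairMeasurement 0 t.divNat.succ,
    fun t => isMeasurement_pairMeasurement (Fin.succ_ne_zero _).symm, ?_⟩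
  · have : (m : ℝ) = 2 ^ n - 1 := by rw [eq_sub_iff_add_eq]; exact_mod_cast hN
    rw [hδη, Nat.cast_mul, this]
    exact hcount
  · refine (seqShatters_pairMeasurement hm L).mono ?_
    rw [hδ, neg_div]
    exact two_rpow_neg_le_one_div hm (by omega) hscale
end

section
/- For every η with 0 < η < 2 there exist a constant c > 0 and n₀ ∈ ℕ such that for every n ≥ n₀ the following holds with N = 2^n and δ = 2^{−n/η}: there exist a natural number D ≥ c · n · δ^{−η}, a sequence of two-outcome measurements E^{(1)},…,E^{(D)} on ℂ^N (N×N Hermitian matrices with eigenvalues in [0,1]), and functions v_t : {−1,1}^{t−1} → ℝ (t = 1,…,D), such that for every sign sequence ε ∈ {−1,1}^D there exists a unit vector ψ ∈ ℂ^N with ε_t · (Re⟨ψ, E^{(t)}ψ⟩ − v_t(ε_1,…,ε_{t−1})) ≥ δ for all t ∈ {1,…,D}. In words: the sequential fat-shattering dimension of n-qubit PURE states against general two-outcome measurements at scale δ = 2^{−n/η} is Ω(n/δ^η) for every η < 2 — the same lower bound, up to the exponent η approaching 2, as for general mixed states. -/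
open Matrix ComplexOrder

/-!
Binary search: the points `y = ∑_{l<k} ε_l 2^{-(l+1)}` of `[-1, 1]` are sequentially shattered by
the thresholds `∑_{l<j} ε_l 2^{-(l+1)}` with margin `2^{-k}`. On `ℂ^{m+2}` the real state with
amplitude `a` on `e₀`, `s y_i` on `e_{i+1}` and the remaining weight on the last coordinate accepts
the effect `½(I + |e₀⟩⟨e_{i+1}| + |e_{i+1}⟩⟨e₀|)` with probability `½ + a s y_i`, so the `m`
middle coordinates run `m` independent binary searches of depth `k`, all with margin `a s 2^{-k}`.
With `m + 2 = 2^n`, `a = ½`, `s ≈ 2^{-n/2}` and `k ≈ (1/η - 1/2) n` this yields `D = m k`, of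
order `n 2^n = n δ^{-η}`, measurements at scale `δ = 2^{-n/η}`.
-/

noncomputable def dyadicSum (e : ℕ → ℝ) (j : ℕ) : ℝ := ∑ l ∈ Finset.range j, e l * 2⁻¹ ^ (l + 1)

lemma dyadicSum_succ (e : ℕ → ℝ) (j : ℕ) :
    dyadicSum e (j + 1) = 2⁻¹ * (e 0 + dyadicSum (fun l => e (l + 1)) j) := by
  rw [dyadicSum, Finset.sum_range_succ', dyadicSum, mul_add, Finset.mul_sum, add_comm]
  congr 1
  · ring
  · exact Finset.sum_congr rfl fun l _ => by ring

lemma dyadicSum_add (e : ℕ → ℝ) (i j : ℕ) :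
    dyadicSum e (i + j) = dyadicSum e i + 2⁻¹ ^ i * dyadicSum (fun l => e (i + l)) j := by
  simp only [dyadicSum, Finset.sum_range_add, Finset.mul_sum, pow_add]
  congr 1
  refine Finset.sum_congr rfl fun l _ => ?_
  ring

lemma abs_dyadicSum_le {e : ℕ → ℝ} (he : ∀ l, |e l| ≤ 1) (j : ℕ) :
    |dyadicSum e j| ≤ 1 - 2⁻¹ ^ j := by
  induction j generalizing e with
  | zero => simp [dyadicSum]
  | succ j ih =>
    rw [dyadicSum_succ, abs_mul, abs_of_pos (by norm_num : (0 : ℝ) < 2⁻¹), pow_succ]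
    have := (abs_add_le _ _).trans (add_le_add (he 0) (ih fun l => he (l + 1)))
    linarith

lemma le_mul_sub_dyadicSum {e : ℕ → ℝ} (he : ∀ l, |e l| ≤ 1) {j k : ℕ} (hej : |e j| = 1)
    (hjk : j < k) : 2⁻¹ ^ k ≤ e j * (dyadicSum e k - dyadicSum e j) := by
  obtain ⟨d, rfl⟩ : ∃ d, k = j + (d + 1) := ⟨k - j - 1, by omega⟩
  have hrest := abs_dyadicSum_le (fun l => he (j + (l + 1))) d
  have hsq : e j * e j = 1 := by rw [← abs_mul_abs_self, hej, one_mul]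
  have hlow := neg_abs_le (e j * dyadicSum (fun l => e (j + (l + 1))) d)
  rw [abs_mul, hej, one_mul] at hlow
  rw [dyadicSum_add e j (d + 1), dyadicSum_succ, add_zero, add_sub_cancel_left]
  calc (2⁻¹ : ℝ) ^ (j + (d + 1)) = 2⁻¹ ^ j * (2⁻¹ * (1 - (1 - 2⁻¹ ^ d))) := by ring
    _ ≤ 2⁻¹ ^ j * (2⁻¹ * (e j * e j + e j * dyadicSum (fun l => e (j + (l + 1))) d)) := by
      gcongr; linarith
    _ = _ := by ring

def IsEffect {ι : Type*} [DecidableEq ι] (E : Matrix ι ι ℂ) : Prop :=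
  E.IsHermitian ∧ E.PosSemidef ∧ (1 - E).PosSemidef

section PairEffect

variable {ι : Type*} [DecidableEq ι]

noncomputable def pairEffect (a b : ι) (σ : ℝ) : Matrix ι ι ℂ :=
  (2⁻¹ : ℂ) • (1 + (σ : ℂ) • (single a b 1 + single b a 1))

lemma isHermitian_pairEffect (a b : ι) (σ : ℝ) : (pairEffect a b σ).IsHermitian := by
  simp only [pairEffect, IsHermitian, conjTranspose_smul, conjTranspose_add, conjTranspose_one,
    conjTranspose_single, star_one, Complex.star_def, Complex.conj_ofReal, map_inv₀, map_ofNat,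
    add_comm (single b a _)]

lemma one_sub_pairEffect (a b : ι) (σ : ℝ) : 1 - pairEffect a b σ = pairEffect a b (-σ) := by
  simp only [pairEffect, Complex.ofReal_neg, neg_smul, ← sub_eq_add_neg, smul_add, smul_sub]
  module

lemma re_dotProduct_pairEffect_mulVec [Fintype ι] (a b : ι) (σ : ℝ) (x : ι → ℂ) :
    (star x ⬝ᵥ pairEffect a b σ *ᵥ x).re
      = 2⁻¹ * ∑ i, ‖x i‖ ^ 2 + σ * (star (x a) * x b).re := by
  have hself : (star x ⬝ᵥ x).re = ∑ i, ‖x i‖ ^ 2 := by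
    simp [dotProduct, Complex.re_sum, Complex.conj_mul', ← Complex.ofReal_pow]
  simp only [pairEffect, smul_mulVec, add_mulVec, one_mulVec, single_mulVec_eq, dotProduct_smul,
    dotProduct_add, dotProduct_single, Pi.star_apply, mul_one, smul_eq_mul]
  have hconj : x a * star (x b) = star (star (x a) * x b) := by simp [mul_comm]
  rw [one_mul, one_mul, mul_comm (x b), hconj, ← Complex.ofReal_ofNat, ← Complex.ofReal_inv,
    Complex.re_ofReal_mul, Complex.add_re, Complex.re_ofReal_mul, Complex.add_re, Complex.star_def,
    Complex.conj_re, hself]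
  ring

lemma posSemidef_pairEffect [Fintype ι] {a b : ι} (hab : a ≠ b) {σ : ℝ} (hσ : |σ| ≤ 1) :
    (pairEffect a b σ).PosSemidef := by
  refine .of_dotProduct_mulVec_nonneg (isHermitian_pairEffect a b σ) fun x => ?_
  refine Complex.nonneg_iff.mpr
    ⟨?_, ((isHermitian_pairEffect a b σ).im_star_dotProduct_mulVec_self x).symm⟩
  have hpair : ‖x a‖ ^ 2 + ‖x b‖ ^ 2 ≤ ∑ i, ‖x i‖ ^ 2 := by
    simpa [Finset.sum_pair hab] using Finset.sum_le_sum_of_subset_of_nonneg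
      (Finset.subset_univ {a, b}) fun i _ _ => sq_nonneg ‖x i‖
  have hcross : |σ * (star (x a) * x b).re| ≤ ‖x a‖ * ‖x b‖ :=
    calc |σ * (star (x a) * x b).re| ≤ 1 * ‖star (x a) * x b‖ := by
          rw [abs_mul]; gcongr; exact Complex.abs_re_le_norm _
      _ = ‖x a‖ * ‖x b‖ := by simp
  rw [re_dotProduct_pairEffect_mulVec]
  nlinarith [neg_abs_le (σ * (star (x a) * x b).re), sq_nonneg (‖x a‖ - ‖x b‖)]

lemma isEffect_pairEffect [Fintype ι] {a b : ι} (hab : a ≠ b) : IsEffect (pairEffect a b 1) :=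
  ⟨isHermitian_pairEffect a b 1, posSemidef_pairEffect hab (by norm_num),
    one_sub_pairEffect a b 1 ▸ posSemidef_pairEffect hab (by norm_num)⟩

end PairEffect

section PaddedState

variable {m : ℕ}

noncomputable def paddedState (a : ℝ) (w : Fin m → ℝ) : Fin (m + 2) → ℂ :=
  Complex.ofReal ∘ Fin.cons a (Fin.snoc w √(1 - a ^ 2 - ∑ i, w i ^ 2))

lemma sum_norm_sq_paddedState {a : ℝ} {w : Fin m → ℝ} (h : a ^ 2 + ∑ i, w i ^ 2 ≤ 1) :
    ∑ j, ‖paddedState a w j‖ ^ 2 = 1 := by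
  rw [Fin.sum_univ_succ, Fin.sum_univ_castSucc]
  simp only [paddedState, Function.comp_apply, Complex.norm_real, Real.norm_eq_abs, sq_abs,
    Fin.cons_zero, Fin.cons_succ, Fin.snoc_castSucc, Fin.snoc_last]
  rw [Real.sq_sqrt (by linarith)]
  ring

lemma re_dotProduct_pairEffect_paddedState {a : ℝ} {w : Fin m → ℝ}
    (h : a ^ 2 + ∑ i, w i ^ 2 ≤ 1) (i : Fin m) :
    (star (paddedState a w) ⬝ᵥ pairEffect 0 i.castSucc.succ 1 *ᵥ paddedState a w).re
      = 2⁻¹ + a * w i := by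
  rw [re_dotProduct_pairEffect_mulVec, sum_norm_sq_paddedState h]
  simp [paddedState]

end PaddedState

def PureStatesSeqShatter {ι : Type*} [Fintype ι] {D : ℕ} (E : Fin D → Matrix ι ι ℂ) (δ : ℝ) :
    Prop :=
  ∃ v : (t : Fin D) → (Fin t.1 → ℝ) → ℝ,
    ∀ ε : Fin D → ℝ, (∀ t, ε t = 1 ∨ ε t = -1) →
      ∃ ψ : ι → ℂ, (∑ i, ‖ψ i‖ ^ 2 = 1) ∧
        ∀ t : Fin D,
          ε t * ((star ψ ⬝ᵥ (E t).mulVec ψ).re - v t (fun s => ε ⟨s.1, s.2.trans t.2⟩)) ≥ δ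

def readFrom {n : ℕ} (f : Fin n → ℝ) (o l : ℕ) : ℝ := if h : o + l < n then f ⟨o + l, h⟩ else 0

lemma abs_readFrom_le {n : ℕ} {f : Fin n → ℝ} (hf : ∀ t, |f t| ≤ 1) (o l : ℕ) :
    |readFrom f o l| ≤ 1 := by
  unfold readFrom
  split_ifs
  · exact hf _
  · simp

lemma readFrom_of_lt {n : ℕ} (f : Fin n → ℝ) {o l : ℕ} (h : o + l < n) :
    readFrom f o l = f ⟨o + l, h⟩ :=
  dif_pos h

theorem pureStatesSeqShatter_pairEffect (m k : ℕ) {a s δ : ℝ} (ha : 0 ≤ a) (hs : 0 ≤ s)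
    (hnorm : a ^ 2 + s ^ 2 * m ≤ 1) (hδ : δ ≤ a * s * 2⁻¹ ^ k) :
    PureStatesSeqShatter
      (fun t : Fin (m * k) => pairEffect (0 : Fin (m + 2)) t.divNat.castSucc.succ 1) δ := by
  -- measurement `t` is step `t % k` of the binary search in block `t / k`
  refine ⟨fun t f => 2⁻¹ + a * s * dyadicSum (readFrom f (k * t.divNat)) t.modNat,
    fun ε hε => ?_⟩
  have hε1 : ∀ t, |ε t| = 1 := fun t => by rcases hε t with h | h <;> simp [h]
  have hsigns (o : ℕ) := abs_readFrom_le (fun t => (hε1 t).le) o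
  set y : Fin m → ℝ := fun i => dyadicSum (readFrom ε (k * i)) k
  have hw : a ^ 2 + ∑ i, (s * y i) ^ 2 ≤ 1 := by
    have hy (i : Fin m) : (s * y i) ^ 2 ≤ s ^ 2 := by
      rw [mul_pow]
      refine mul_le_of_le_one_right (sq_nonneg s) (sq_le_one_iff_abs_le_one _ |>.mpr ?_)
      exact (abs_dyadicSum_le (hsigns _) k).trans (by simp)
    calc a ^ 2 + ∑ i, (s * y i) ^ 2 ≤ a ^ 2 + ∑ _i : Fin m, s ^ 2 := by
          gcongr a ^ 2 + ∑ i, ?_ with i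
          exact hy i
      _ ≤ 1 := by simpa [mul_comm] using hnorm
  refine ⟨paddedState a (fun i => s * y i), sum_norm_sq_paddedState hw, fun t => ?_⟩
  rw [re_dotProduct_pairEffect_paddedState hw]
  set e := readFrom ε (k * t.divNat)
  have ht : k * t.divNat + t.modNat = t := Nat.div_add_mod t k
  have het : e t.modNat = ε t := (readFrom_of_lt ε (ht ▸ t.2)).trans (congrArg ε (Fin.ext ht))
  have hprefix : dyadicSum (readFrom (fun s : Fin t => ε ⟨s, s.2.trans t.2⟩) (k * t.divNat))
      t.modNat = dyadicSum e t.modNat := by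
    refine Finset.sum_congr rfl fun l hl => ?_
    have hl : k * t.divNat + l < t := by rw [Finset.mem_range] at hl; omega
    rw [readFrom_of_lt _ hl]
    exact congrArg (· * _) (readFrom_of_lt ε (hl.trans t.2)).symm
  have hmargin := le_mul_sub_dyadicSum (hsigns _) (het ▸ hε1 t) t.modNat.2
  beta_reduce
  rw [hprefix, ← het, ge_iff_le]
  calc δ ≤ a * s * 2⁻¹ ^ k := hδ
    _ ≤ a * s * (e t.modNat * (dyadicSum e k - dyadicSum e t.modNat)) := by gcongr
    _ = _ := by ring

lemma pureStatesSeqShatter_pairEffect_of_eq_two_pow {m n : ℕ} (hm : m + 2 = 2 ^ n) (k : ℕ)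
    {δ : ℝ} (hδ : δ ≤ 2 ^ (-(n : ℝ) / 2 - k - 2)) :
    PureStatesSeqShatter
      (fun t : Fin (m * k) => pairEffect (0 : Fin (m + 2)) t.divNat.castSucc.succ 1) δ := by
  set s : ℝ := 2 ^ (-(n : ℝ) / 2 - 1)
  refine pureStatesSeqShatter_pairEffect m k (a := 1 / 2) (s := s) (by norm_num) (by positivity)
    ?_ (hδ.trans_eq ?_)
  · have hs : s ^ 2 * (m + 2) = 2 ^ (-2 : ℝ) := by
      rw [← Real.rpow_natCast, ← Real.rpow_mul zero_le_two, (by exact_mod_cast hm :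
        (m : ℝ) + 2 = 2 ^ n), ← Real.rpow_natCast, ← Real.rpow_add two_pos]
      congr 1; ring
    rw [Real.rpow_neg zero_le_two] at hs
    nlinarith [sq_nonneg s]
  · rw [show -(n : ℝ) / 2 - k - 2 = -1 + (-(n : ℝ) / 2 - 1) + -(k : ℝ) by ring,
      Real.rpow_add two_pos, Real.rpow_add two_pos, Real.rpow_neg_one,
      Real.rpow_neg zero_le_two, Real.rpow_natCast, inv_pow]
    ring

lemma exists_nat_half_le_of_six_le {x : ℝ} (hx : 6 ≤ x) :
    ∃ k : ℕ, (k : ℝ) + 2 ≤ x ∧ x / 2 ≤ k := by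
  have h2 : 2 ≤ ⌊x⌋₊ := Nat.le_floor (by push_cast; linarith)
  refine ⟨⌊x⌋₊ - 2, ?_, ?_⟩ <;> push_cast [Nat.cast_sub h2]
  · linarith [Nat.floor_le (by linarith : 0 ≤ x)]
  · linarith [Nat.lt_floor_add_one x]

/-- For every 0 < η < 2 there are c > 0 and n₀ such that for all n ≥ n₀, with
    N = 2^n and δ = 2^{−n/η}, the class of N-dimensional PURE states δ-shatters sequentially
    a sequence of D ≥ c·n·δ^{−η} two-outcome measurements (Hermitian matrices E with both E
    and I − E positive semidefinite, i.e. eigenvalues in [0,1]): the same lower bound as for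
    mixed states. -/
theorem pure_states_sfat_lower (η : ℝ) (hη0 : 0 < η) (hη2 : η < 2) :
    ∃ c : ℝ, 0 < c ∧ ∃ n₀ : ℕ, ∀ n : ℕ, n₀ ≤ n →
      ∀ N : ℕ, N = 2 ^ n → ∀ δ : ℝ, δ = (2 : ℝ) ^ (-(n : ℝ) / η) →
        ∃ D : ℕ, (D : ℝ) ≥ c * n * δ ^ (-η) ∧
          ∃ E : Fin D → Matrix (Fin N) (Fin N) ℂ,
            (∀ t : Fin D, (E t).IsHermitian ∧ (E t).PosSemidef ∧ (1 - E t).PosSemidef) ∧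
            ∃ v : (t : Fin D) → (Fin t.1 → ℝ) → ℝ,
              ∀ ε : Fin D → ℝ, (∀ t, ε t = 1 ∨ ε t = -1) →
                ∃ ψ : Fin N → ℂ, (∑ i, ‖ψ i‖ ^ 2 = 1) ∧
                  ∀ t : Fin D,
                    ε t * ((star ψ ⬝ᵥ (E t).mulVec ψ).re
                      - v t (fun s => ε ⟨s.1, s.2.trans t.2⟩)) ≥ δ := by
  set α := 1 / η - 1 / 2
  have hα : 0 < α := sub_pos.mpr (one_div_lt_one_div_of_lt hη0 hη2)
  refine ⟨α / 4, by positivity, ⌈6 / α⌉₊ + 2, fun n hn N hN δ hδ => ?_⟩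
  have hαn : 6 ≤ α * n := by
    have := Nat.ceil_le.mp (by omega : ⌈6 / α⌉₊ ≤ n)
    rwa [div_le_iff₀ hα, mul_comm] at this
  obtain ⟨k, hkup, hklow⟩ := exists_nat_half_le_of_six_le hαn
  have hN4 : 4 ≤ N := hN ▸ Nat.pow_le_pow_right two_pos (by omega : 2 ≤ n)
  obtain ⟨m, rfl⟩ : ∃ m, N = m + 2 := ⟨N - 2, by omega⟩
  have hδk : δ ≤ 2 ^ (-(n : ℝ) / 2 - k - 2) := by
    have : α * n = n / η - n / 2 := by ring
    rw [hδ, neg_div]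
    exact Real.rpow_le_rpow_of_exponent_le one_le_two (by linarith)
  refine ⟨m * k, ?_, _, fun t => isEffect_pairEffect (Fin.succ_ne_zero _).symm,
    pureStatesSeqShatter_pairEffect_of_eq_two_pow hN k hδk⟩
  have hm : (2 : ℝ) ≤ m := by exact_mod_cast (by omega : 2 ≤ m)
  have hδN : δ ^ (-η) = m + 2 := by
    rw [hδ, ← Real.rpow_mul zero_le_two, show -(n : ℝ) / η * -η = n by field_simp,
      Real.rpow_natCast]
    exact_mod_cast hN.symm
  rw [hδN, ge_iff_le, Nat.cast_mul]
  calc α / 4 * n * (m + 2) = (α * n / 2) * ((m + 2) / 2) := by ring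
    _ ≤ k * m := by gcongr; linarith
    _ = m * k := mul_comm _ _
end

section
/- Let N ≥ 3. For every sign sequence ε ∈ {−1,1}^{N−2} there exists a unit vector ψ ∈ ℂ^N such that for every i ∈ {1,…,N−2}: ε_i · ( Re⟨ψ, E_{0,i} ψ⟩ − (1/4 + 1/(32(N−1))) ) ≥ 1/(4√(2(N−1))). Consequently, the class of N-dimensional pure states fat-shatters (in the ordinary, non-sequential sense, with common witness value 1/4 + 1/(32(N−1))) the set of N−2 measurements {E_{0,1},…,E_{0,N−2}} at scale δ = 1/(4√(2(N−1))); in particular the δ-fat-shattering dimension of pure states scales as Ω(1/δ²). -/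
open Matrix

/-!
Since `E_{0,j} = (1/2) v vᵀ` with `v = e_0 + e_j`, the acceptance probability of a state `ψ` is
`|ψ_0 + ψ_j|² / 2`. Take `ψ_0 = 1/√2`, `ψ_i = ε_i c` for `1 ≤ i ≤ N - 2`, and put the remaining
mass `1/2 - (N - 2) c²` on the last coordinate. Then `E_{0,i}` accepts with probability
`1/4 + c²/2 + ε_i c/√2`, and `c = 1/(4√(N - 1))` turns `c²/2` into the witness offset
`1/(32(N - 1))` and `c/√2` into the margin `1/(4√(2(N - 1)))`.
-/

theorem star_dotProduct_mulVec_eq_norm_sum_sq_div_two {n : Type*} [Fintype n] [DecidableEq n]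
    (S : Finset n) (E : Matrix n n ℂ) (hE : ∀ a b, E a b = if a ∈ S ∧ b ∈ S then 1 / 2 else 0)
    (ψ : n → ℂ) :
    star ψ ⬝ᵥ E *ᵥ ψ = ((‖∑ a ∈ S, ψ a‖ ^ 2 / 2 : ℝ) : ℂ) := by
  have hEψ : E *ᵥ ψ = fun a => if a ∈ S then (∑ b ∈ S, ψ b) / 2 else 0 := by
    ext a
    simp only [mulVec, dotProduct, hE, ite_and, ite_mul, one_div, inv_mul_eq_div, zero_mul]
    split_ifs <;> simp [Finset.sum_ite_mem, Finset.sum_div]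
  simp only [hEψ, dotProduct, mul_ite, mul_zero, Finset.sum_ite_mem, Finset.univ_inter,
    Pi.star_apply, Complex.star_def]
  rw [← Finset.sum_mul, ← map_sum, mul_div_assoc', Complex.conj_mul']
  push_cast
  rfl

noncomputable def shatteringState {M : ℕ} (ε : Fin M → ℝ) (c : ℝ) : Fin (M + 2) → ℝ :=
  Fin.cons (√2)⁻¹ (Fin.snoc (fun i => ε i * c) √(1 / 2 - M * c ^ 2))

section

variable {M : ℕ} (ε : Fin M → ℝ) (c : ℝ)

theorem shatteringState_zero : shatteringState ε c 0 = (√2)⁻¹ := rfl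

theorem shatteringState_succ_castSucc (i : Fin M) :
    shatteringState ε c i.castSucc.succ = ε i * c := by
  simp [shatteringState]

theorem sum_sq_shatteringState (hε : ∀ i, ε i = 1 ∨ ε i = -1) (hc : M * c ^ 2 ≤ 1 / 2) :
    ∑ a, shatteringState ε c a ^ 2 = 1 := by
  have hεc : ∀ i, (ε i * c) ^ 2 = c ^ 2 := fun i => by rcases hε i with h | h <;> simp [h]
  rw [Fin.sum_univ_succ, Fin.sum_univ_castSucc]
  simp only [shatteringState, Fin.cons_zero, Fin.cons_succ, Fin.snoc_castSucc, Fin.snoc_last, hεc,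
    Finset.sum_const, Finset.card_univ, Fintype.card_fin, nsmul_eq_mul, inv_pow,
    Real.sq_sqrt (by linarith : 0 ≤ 1 / 2 - M * c ^ 2), Real.sq_sqrt zero_le_two]
  ring

theorem shatteringState_margin {i : Fin M} (hε : ε i = 1 ∨ ε i = -1) :
    ε i * ((shatteringState ε c 0 + shatteringState ε c i.castSucc.succ) ^ 2 / 2
      - (1 / 4 + c ^ 2 / 2)) = c / √2 := by
  have h2 : (√2)⁻¹ ^ 2 = 1 / 2 := by simp
  rw [shatteringState_zero, shatteringState_succ_castSucc]
  rcases hε with h | h <;> rw [h]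
  · linear_combination h2 / 2
  · linear_combination -h2 / 2

end

/-- For N ≥ 3, every sign sequence ε ∈ {−1,1}^{N−2} is realized, with common
    witness value 1/4 + 1/(32(N−1)) and margin 1/(4√(2(N−1))), by a pure state ψ ∈ ℂ^N:
    ε_i (Re⟨ψ, E_{0,i} ψ⟩ − (1/4 + 1/(32(N−1)))) ≥ 1/(4√(2(N−1))) for all i ∈ {1,…,N−2}.
    Here E_{0,j} is the matrix with entries 1/2 at positions (a,b) with a,b ∈ {0,j} and 0
    elsewhere, i.e. (1/2)(e_0e_0* + e_je_j* + e_0e_j* + e_je_0*). -/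
theorem pure_states_fat_shattering (N : ℕ) (hN : 3 ≤ N)
    (Em : ℕ → Matrix (Fin N) (Fin N) ℂ)
    (hEm : ∀ j : ℕ, ∀ a b : Fin N,
      Em j a b = if (a.1 = 0 ∨ a.1 = j) ∧ (b.1 = 0 ∨ b.1 = j) then 1 / 2 else 0) :
    ∀ ε : Fin (N - 2) → ℝ, (∀ i, ε i = 1 ∨ ε i = -1) →
      ∃ ψ : Fin N → ℂ, (∑ a, ‖ψ a‖ ^ 2 = 1) ∧
        ∀ i : Fin (N - 2),
          ε i * ((star ψ ⬝ᵥ (Em (i.1 + 1)).mulVec ψ).re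
            - (1 / 4 + 1 / (32 * ((N : ℝ) - 1))))
            ≥ 1 / (4 * Real.sqrt (2 * ((N : ℝ) - 1))) := by
  obtain ⟨M, rfl⟩ : ∃ M, N = M + 2 := ⟨N - 2, by omega⟩
  rw [Nat.add_sub_cancel]
  intro ε hε
  set c : ℝ := 1 / (4 * √((M : ℝ) + 1))
  have hN1 : ((M + 2 : ℕ) : ℝ) - 1 = M + 1 := by push_cast; ring
  have hc2 : c ^ 2 = 1 / (16 * ((M : ℝ) + 1)) := by
    rw [div_pow, mul_pow, Real.sq_sqrt (by positivity)]; norm_num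
  have hc : M * c ^ 2 ≤ 1 / 2 := by
    rw [hc2, mul_one_div, div_le_iff₀ (by positivity)]; linarith
  refine ⟨fun a => shatteringState ε c a, ?_, fun i => ?_⟩
  · simpa [Complex.norm_real, sq_abs] using sum_sq_shatteringState ε c hε hc
  have hE : ∀ a b, Em (i.1 + 1) a b =
      if a ∈ ({0, i.castSucc.succ} : Finset _) ∧ b ∈ ({0, i.castSucc.succ} : Finset _)
      then 1 / 2 else 0 := fun _ _ => by
    simp only [hEm, Finset.mem_insert, Finset.mem_singleton, Fin.ext_iff, Fin.val_zero, Fin.val_succ,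
      Fin.val_castSucc]
  have hwitness : 1 / (32 * (((M + 2 : ℕ) : ℝ) - 1)) = c ^ 2 / 2 := by
    rw [hN1, hc2, div_div]; ring
  have hmargin : 1 / (4 * √(2 * (((M + 2 : ℕ) : ℝ) - 1))) = c / √2 := by
    rw [hN1, Real.sqrt_mul zero_le_two]; ring
  rw [star_dotProduct_mulVec_eq_norm_sum_sq_div_two _ _ hE, Complex.ofReal_re,
    Finset.sum_pair (Fin.succ_ne_zero _).symm, ← Complex.ofReal_add, Complex.norm_real,
    Real.norm_eq_abs, sq_abs, hwitness, hmargin]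
  exact (shatteringState_margin ε c (hε i)).ge
end

section
/- Let N ≥ 2. For every sign sequence ε ∈ {−1,1}^{N−1} there exists an N-dimensional density matrix ρ such that for every i ∈ {1,…,N−1}: ε_i · ( Re Tr(E_{0,i} ρ) − (1/4)(1 + 1/(N−1)) ) ≥ 1/(4√(N−1)). Consequently, the class of N-dimensional density matrices fat-shatters (in the ordinary, non-sequential sense, with common witness value (1/4)(1 + 1/(N−1))) the set of N−1 measurements {E_{0,1},…,E_{0,N−1}} at scale δ = 1/(4√(N−1)). -/
/-! The witness can be taken pure and real: `ρ = u uᵀ` with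
`u = (1/√2, ε₁/√(2(N-1)), …, ε_{N-1}/√(2(N-1)))`, a unit vector. Since `E_{0,i}` is the projection
onto `(e₀ + eᵢ)/√2`, `Tr(E_{0,i} ρ) = (u₀ + uᵢ)²/2 = 1/4 + 1/(4(N-1)) + εᵢ/(2√(N-1))`, so every
`εᵢ` is realised with margin `1/(2√(N-1))`, twice the one claimed. -/

open ComplexOrder Matrix

section PairMatrix

variable {n K : Type*} [Fintype n] [DecidableEq n] [Field K]

/-- The paper's `E_{p,q}`. -/
def pairMatrix (p q : n) : Matrix n n K :=
  of fun a b => if (a = p ∨ a = q) ∧ (b = p ∨ b = q) then 1 / 2 else 0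

lemma sum_ite_eq_or_eq {p q : n} (hpq : p ≠ q) (g : n → K) :
    ∑ b, (if b = p ∨ b = q then g b else 0) = g p + g q := by
  simpa [Finset.sum_pair hpq] using Finset.sum_ite_mem Finset.univ {p, q} g

lemma pairMatrix_mulVec {p q : n} (hpq : p ≠ q) (x : n → K) :
    pairMatrix p q *ᵥ x = fun a => if a = p ∨ a = q then (x p + x q) / 2 else 0 := by
  ext a
  split_ifs with ha
  · simp only [mulVec, dotProduct, pairMatrix, of_apply, ha, true_and, ite_mul, one_div,
      zero_mul]
    rw [sum_ite_eq_or_eq hpq (fun b => 2⁻¹ * x b)]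
    ring
  · simp [mulVec, dotProduct, pairMatrix, ha]

lemma trace_pairMatrix_mul_vecMulVec {p q : n} (hpq : p ≠ q) (x y : n → K) :
    trace (pairMatrix p q * vecMulVec x y) = (x p + x q) * (y p + y q) / 2 := by
  rw [mul_vecMulVec, trace_vecMulVec, pairMatrix_mulVec hpq, dotProduct]
  simp only [ite_mul, zero_mul]
  rw [sum_ite_eq_or_eq hpq (fun a => (x p + x q) / 2 * y a)]
  ring

end PairMatrix

section RealPureState

variable {n : Type*} [Fintype n]

lemma posSemidef_vecMulVec_ofReal (u : n → ℝ) :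
    (vecMulVec (fun a => (u a : ℂ)) fun a => (u a : ℂ)).PosSemidef := by
  have hstar : star (fun a => (u a : ℂ)) = fun a => (u a : ℂ) :=
    funext fun a => Complex.conj_ofReal (u a)
  simpa only [hstar] using posSemidef_vecMulVec_self_star (fun a => (u a : ℂ))

lemma trace_vecMulVec_ofReal (u : n → ℝ) :
    trace (vecMulVec (fun a => (u a : ℂ)) fun a => (u a : ℂ)) = ((∑ a, u a ^ 2 : ℝ) : ℂ) := by
  simp [dotProduct, sq]

lemma re_trace_pairMatrix_mul_vecMulVec_ofReal [DecidableEq n] {p q : n} (hpq : p ≠ q)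
    (u : n → ℝ) :
    (trace (pairMatrix p q * vecMulVec (fun a => (u a : ℂ)) fun a => (u a : ℂ))).re
      = (u p + u q) ^ 2 / 2 := by
  rw [trace_pairMatrix_mul_vecMulVec hpq]
  norm_cast
  ring

end RealPureState

noncomputable def shatteringVector {M : ℕ} (ε : Fin M → ℝ) : Fin (M + 1) → ℝ :=
  Fin.cons (√2)⁻¹ fun i => ε i / √(2 * M)

lemma sum_shatteringVector_sq {M : ℕ} (hM : M ≠ 0) {ε : Fin M → ℝ} (hε : ∀ i, ε i ^ 2 = 1) :
    ∑ a, shatteringVector ε a ^ 2 = 1 := by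
  have h2 : √2 ^ 2 = 2 := Real.sq_sqrt (by norm_num)
  have h2M : √(2 * M) ^ 2 = 2 * M := Real.sq_sqrt (by positivity)
  simp only [shatteringVector, Fin.sum_univ_succ, Fin.cons_zero, Fin.cons_succ, div_pow, hε,
    inv_pow, h2, h2M, Finset.sum_const, Finset.card_univ, Fintype.card_fin, nsmul_eq_mul]
  field_simp
  ring

lemma sign_mul_margin_eq {M : ℝ} (hM : 0 < M) {e : ℝ} (he : e ^ 2 = 1) :
    e * (((√2)⁻¹ + e / √(2 * M)) ^ 2 / 2 - 1 / 4 * (1 + 1 / M)) = 1 / (2 * √M) := by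
  have h2 : √2 ^ 2 = 2 := Real.sq_sqrt (by norm_num)
  have hM' : √M ^ 2 = M := Real.sq_sqrt hM.le
  have hM_sqrt : 0 < √M := Real.sqrt_pos.2 hM
  rw [Real.sqrt_mul (by norm_num)]
  field_simp
  rw [h2, hM']
  linear_combination (8 * √M * M + 4 * e * M) * he + 4 * e * M * hM'

lemma exists_posSemidef_trace_eq_one_sign_mul_margin_eq {M : ℕ} (hM : M ≠ 0) (ε : Fin M → ℝ)
    (hε : ∀ i, ε i ^ 2 = 1) :
    ∃ ρ : Matrix (Fin (M + 1)) (Fin (M + 1)) ℂ, ρ.PosSemidef ∧ ρ.trace = 1 ∧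
      ∀ i, ε i * ((trace (pairMatrix 0 i.succ * ρ)).re - 1 / 4 * (1 + 1 / M)) = 1 / (2 * √M) := by
  set u := shatteringVector ε
  refine ⟨vecMulVec (fun a => (u a : ℂ)) fun a => (u a : ℂ), posSemidef_vecMulVec_ofReal u, ?_,
    fun i => ?_⟩
  · rw [trace_vecMulVec_ofReal, sum_shatteringVector_sq hM hε, Complex.ofReal_one]
  rw [re_trace_pairMatrix_mul_vecMulVec_ofReal (Fin.succ_ne_zero i).symm]
  simp only [u, shatteringVector, Fin.cons_zero, Fin.cons_succ]
  exact sign_mul_margin_eq (by positivity) (hε i)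

/-- For N ≥ 2, every sign sequence ε ∈ {−1,1}^{N−1} is realized, with common
    witness value (1/4)(1 + 1/(N−1)) and margin 1/(4√(N−1)), by an N-dimensional density
    matrix ρ: ε_i (Re Tr(E_{0,i} ρ) − (1/4)(1 + 1/(N−1))) ≥ 1/(4√(N−1)) for all
    i ∈ {1,…,N−1}. Here E_{0,j} is the matrix with entries 1/2 at positions (a,b) with
    a,b ∈ {0,j} and 0 elsewhere, i.e. (1/2)(e_0e_0* + e_je_j* + e_0e_j* + e_je_0*). -/
theorem mixed_states_fat_shattering (N : ℕ) (hN : 2 ≤ N)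
    (Em : ℕ → Matrix (Fin N) (Fin N) ℂ)
    (hEm : ∀ j : ℕ, ∀ a b : Fin N,
      Em j a b = if (a.1 = 0 ∨ a.1 = j) ∧ (b.1 = 0 ∨ b.1 = j) then 1 / 2 else 0) :
    ∀ ε : Fin (N - 1) → ℝ, (∀ i, ε i = 1 ∨ ε i = -1) →
      ∃ ρ : Matrix (Fin N) (Fin N) ℂ, ρ.PosSemidef ∧ ρ.trace = 1 ∧
        ∀ i : Fin (N - 1),
          ε i * ((Matrix.trace (Em (i.1 + 1) * ρ)).re
            - (1 / 4) * (1 + 1 / ((N : ℝ) - 1)))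
            ≥ 1 / (4 * Real.sqrt ((N : ℝ) - 1)) := by
  obtain ⟨M, rfl⟩ : ∃ M, N = M + 1 := ⟨N - 1, by omega⟩
  have hM : 0 < M := by omega
  intro ε hε
  have hε2 (i) : ε i ^ 2 = 1 := by rcases hε i with h | h <;> simp [h]
  obtain ⟨ρ, hρ, htrace, hmargin⟩ :=
    exists_posSemidef_trace_eq_one_sign_mul_margin_eq hM.ne' ε hε2
  refine ⟨ρ, hρ, htrace, fun i => ?_⟩
  have hE : Em (i.1 + 1) = pairMatrix 0 i.succ := by
    ext a b
    simp only [hEm, pairMatrix, of_apply, Fin.ext_iff, Fin.val_zero, Fin.val_succ]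
  rw [hE, Nat.cast_add_one, add_sub_cancel_right, hmargin i, ge_iff_le]
  gcongr
  norm_num
end
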